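/- arXiv:0902.0902 — 6 statements merged into one kernel-verified Lean document; each statement's English description precedes it below -/
import Mathlib

section
/- Let Γ be a finite tree rooted at a vertex x, with every edge directed away from the root, and let F and G be two distinct directed paths in Γ whose vertex sets have nonempty intersection. Then the set of vertices common to F and G forms a connected directed path in Γ of length |F ∩ G| (where |F ∩ G| denotes the number of common vertices), this path starts at the first vertex of F or at the first vertex of G, and its first vertex is whichever of the two starting vertices of F and G has the larger level. -/
/-!
Levels increase by one along a directed path, and in an acyclic graph a vertex has at most one
parent. Let `F` start at a level no smaller than the start of `P`. A vertex of `F` past its start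
that lies on `P` has too large a level to be the start of `P`, so its predecessor on `P` is its
parent, which is also its predecessor on `F`. Hence the common vertices form an initial segment of
`F`, which is a directed path starting at the head of `F`.
-/

open MvPolynomial CategoryTheory

section Tree

variable {V : Type} [Fintype V] [DecidableEq V] (G : SimpleGraph V) (root : V)

/-- The level of a vertex of a rooted tree: its distance from the root, i.e. the number of
edges on the unique path from the root. -/
noncomputable def level (v : V) : ℕ := G.dist root v

/-- Directed adjacency in a rooted tree: the edges of the tree directed away from the root. -/
def dirAdj (u v : V) : Prop := G.Adj u v ∧ G.dist root v = G.dist root u + 1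

/-- A directed path in the rooted tree: a sequence of vertices in which each consecutive
pair is joined by a directed edge (away from the root). -/
def IsDirPath (p : List V) : Prop := p.Chain' (dirAdj G root)

/-- The height of the rooted tree: the maximal level of a vertex. -/
noncomputable def treeHeight : ℕ := sSup (Set.range fun v => G.dist root v)

/-- A leaf of the graph: a vertex adjacent to exactly one other vertex. -/
def graphLeaf (v : V) : Prop := ∃! u, G.Adj v u

/-- The vertex sets of the directed paths of length `t`: the facets of the simplicial
complex `Δ_t(Γ)`. -/
def pathFacets (t : ℕ) : Set (Finset V) :=
  {S | ∃ p : List V, IsDirPath G root p ∧ p.length = t ∧ p.toFinset = S}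

variable (K : Type) [Field K]

/-- The path ideal of the rooted tree restricted to directed paths all of whose vertices lie
in `S` (i.e. the path ideal of the induced subgraph on `S`). -/
noncomputable def pathIdealOn (S : Set V) (t : ℕ) : Ideal (MvPolynomial V K) :=
  Ideal.span {m | ∃ p : List V, IsDirPath G root p ∧ p.length = t ∧ (∀ v ∈ p, v ∈ S) ∧
    m = (p.map X).prod}

/-- The path ideal `I_t(Γ)` of the rooted tree `Γ`: the ideal generated by the monomials
corresponding to directed paths of length `t`. -/
noncomputable def pathIdeal (t : ℕ) : Ideal (MvPolynomial V K) :=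
  pathIdealOn G root K Set.univ t

end Tree

namespace List

variable {α : Type*}

theorem IsChain.exists_rel_of_mem_tail {R : α → α → Prop} {a x : α} {l : List α}
    (h : IsChain R (a :: l)) (hx : x ∈ l) : ∃ y ∈ a :: l, R y x := by
  induction l generalizing a with
  | nil => simp at hx
  | cons b l ih =>
    rw [isChain_cons_cons] at h
    rcases mem_cons.mp hx with rfl | hx
    · exact ⟨a, mem_cons_self, h.1⟩
    · obtain ⟨y, hy, hyx⟩ := ih h.2 hx
      exact ⟨y, mem_cons_of_mem _ hy, hyx⟩

theorem filter_eq_takeWhile_of_isChain {p : α → Bool} {l : List α}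
    (h : IsChain (fun a b => p b → p a) l) : l.filter p = l.takeWhile p := by
  induction l with
  | nil => rfl
  | cons a l ih =>
    by_cases ha : p a
    · rw [filter_cons_of_pos ha, takeWhile_cons_of_pos ha, ih h.tail]
    · rw [filter_cons_of_neg ha, takeWhile_cons_of_neg ha, filter_eq_nil_iff]
      intro x hx
      exact h.induction (fun y => ¬p y) _ (fun _ _ hyz hy hz => hy (hyz hz)) (fun _ => ha) x
        (mem_cons_of_mem _ hx)

end List

section RootedTree

variable {V : Type} {G : SimpleGraph V} {root : V}

theorem dist_lt_of_dirAdj {u v : V} (h : dirAdj G root u v) : G.dist root u < G.dist root v :=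
  h.2 ▸ Nat.lt_succ_self _

theorem exists_isPath_penultimate_eq_of_dirAdj {u v : V} (h : dirAdj G root u v) :
    ∃ p : G.Walk root v, p.IsPath ∧ p.penultimate = u := by
  have hv : G.Reachable root v := .of_dist_ne_zero (h.2 ▸ Nat.succ_ne_zero _)
  obtain ⟨q, hq⟩ := (hv.trans h.1.symm.reachable).exists_walk_length_eq_dist
  refine ⟨q.concat h.1, (q.concat h.1).isPath_of_length_eq_dist ?_, q.penultimate_concat h.1⟩
  rw [SimpleGraph.Walk.length_concat, hq, h.2]

theorem dirAdj_left_unique (hG : G.IsAcyclic) {u w v : V} (hu : dirAdj G root u v)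
    (hw : dirAdj G root w v) : u = w := by
  obtain ⟨p, hp, rfl⟩ := exists_isPath_penultimate_eq_of_dirAdj hu
  obtain ⟨q, hq, rfl⟩ := exists_isPath_penultimate_eq_of_dirAdj hw
  exact congrArg (fun r : G.Path root v => r.1.penultimate)
    ((hG.subsingleton_path root v).elim ⟨p, hp⟩ ⟨q, hq⟩)

namespace IsDirPath

variable {P : List V}

theorem dist_head_le (hP : IsDirPath G root P) (hne : P ≠ []) {v : V} (hv : v ∈ P) :
    G.dist root (P.head hne) ≤ G.dist root v :=
  hP.induction (fun x => G.dist root (P.head hne) ≤ G.dist root x) P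
    (fun _ _ hxy hx => hx.trans (dist_lt_of_dirAdj hxy).le) (fun _ => le_rfl) v hv

theorem nodup (hP : IsDirPath G root P) : P.Nodup := by
  have : (P.map (G.dist root)).IsChain (· < ·) :=
    List.isChain_map_of_isChain _ (fun _ _ h => dist_lt_of_dirAdj h) hP
  exact List.Nodup.of_map _ (this.pairwise.imp ne_of_lt)

theorem mem_of_dirAdj (hG : G.IsAcyclic) (hP : IsDirPath G root P) (hne : P ≠ []) {u v : V}
    (huv : dirAdj G root u v) (hv : v ∈ P) (hu : G.dist root (P.head hne) ≤ G.dist root u) :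
    u ∈ P := by
  obtain ⟨a, l, rfl⟩ := List.exists_cons_of_ne_nil hne
  have hva : v ≠ a := fun hva => (dist_lt_of_dirAdj huv).not_ge (hva ▸ hu)
  obtain ⟨w, hw, hwv⟩ := hP.exists_rel_of_mem_tail ((List.mem_cons.mp hv).resolve_left hva)
  exact dirAdj_left_unique hG huv hwv ▸ hw

theorem exists_eq_inter_of_dist_head_le [DecidableEq V] (hG : G.IsAcyclic) {F : List V}
    (hF : IsDirPath G root F) (hP : IsDirPath G root P) (hFne : F ≠ []) (hPne : P ≠ [])
    (hint : (F.toFinset ∩ P.toFinset).Nonempty)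
    (hle : G.dist root (P.head hPne) ≤ G.dist root (F.head hFne)) :
    ∃ (q : List V) (hq : q ≠ []), IsDirPath G root q ∧ q.toFinset = F.toFinset ∩ P.toFinset ∧
      q.length = (F.toFinset ∩ P.toFinset).card ∧ q.head hq = F.head hFne := by
  set q := F.takeWhile fun v => v ∈ P
  have hprefix : q <+: F := List.takeWhile_prefix _
  have hfilter : (F.filter fun v => v ∈ P) = q := by
    refine List.filter_eq_takeWhile_of_isChain (hF.imp_of_mem_imp fun a b ha _ hab hb => ?_)
    simp only [decide_eq_true_eq] at hb ⊢
    exact hP.mem_of_dirAdj hG hPne hab hb (hle.trans (hF.dist_head_le hFne ha))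
  have hset : q.toFinset = F.toFinset ∩ P.toFinset := by
    rw [← hfilter, List.toFinset_filter]
    simp only [decide_eq_true_eq, ← List.mem_toFinset]
    exact Finset.filter_mem_eq_inter
  have hq : q ≠ [] := by
    obtain ⟨v, hv⟩ := hint
    rintro hq
    simp [← hset, hq] at hv
  refine ⟨q, hq, hF.prefix hprefix, hset, ?_, hprefix.head hq⟩
  rw [← hset, List.toFinset_card_of_nodup (hF.nodup.sublist hprefix.sublist)]

end IsDirPath

end RootedTree

theorem path_intersection_is_path_general
    (V : Type) [DecidableEq V] (G : SimpleGraph V) (hG : G.IsTree) (root : V)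
    (F Gp : List V) (hF : IsDirPath G root F) (hGp : IsDirPath G root Gp)
    (hFne : F ≠ []) (hGne : Gp ≠ [])
    (hint : (F.toFinset ∩ Gp.toFinset).Nonempty) :
    ∃ (q : List V) (hq : q ≠ []),
      IsDirPath G root q ∧
      q.toFinset = F.toFinset ∩ Gp.toFinset ∧
      q.length = (F.toFinset ∩ Gp.toFinset).card ∧
      (q.head hq = F.head hFne ∨ q.head hq = Gp.head hGne) ∧
      level G root (q.head hq) =
        max (level G root (F.head hFne)) (level G root (Gp.head hGne)) := by
  rcases le_total (level G root (Gp.head hGne)) (level G root (F.head hFne)) with hle | hle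
  · obtain ⟨q, hq, hpath, hset, hlen, hhead⟩ :=
      hF.exists_eq_inter_of_dist_head_le hG.isAcyclic hGp hFne hGne hint hle
    exact ⟨q, hq, hpath, hset, hlen, .inl hhead, hhead ▸ (max_eq_left hle).symm⟩
  · rw [Finset.inter_comm] at hint ⊢
    obtain ⟨q, hq, hpath, hset, hlen, hhead⟩ :=
      hGp.exists_eq_inter_of_dist_head_le hG.isAcyclic hF hGne hFne hint hle
    exact ⟨q, hq, hpath, hset, hlen, .inr hhead, hhead ▸ (max_eq_right hle).symm⟩

/-- In a finite rooted tree with edges directed away from the root, the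
common vertices of two distinct directed paths `F`, `G` with nonempty intersection form a
connected directed path of length `|F ∩ G|`, which starts at the first vertex of `F` or of
`G`; namely, at whichever of the two starting vertices has the larger level. -/
theorem path_intersection_is_path
    (V : Type) [Fintype V] [DecidableEq V] (G : SimpleGraph V) (hG : G.IsTree) (root : V)
    (F Gp : List V) (hF : IsDirPath G root F) (hGp : IsDirPath G root Gp)
    (hFne : F ≠ []) (hGne : Gp ≠ []) (hdist : F ≠ Gp)
    (hint : (F.toFinset ∩ Gp.toFinset).Nonempty) :
    ∃ (q : List V) (hq : q ≠ []),
      IsDirPath G root q ∧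
      q.toFinset = F.toFinset ∩ Gp.toFinset ∧
      q.length = (F.toFinset ∩ Gp.toFinset).card ∧
      (q.head hq = F.head hFne ∨ q.head hq = Gp.head hGne) ∧
      level G root (q.head hq) =
        max (level G root (F.head hFne)) (level G root (Gp.head hGne)) :=
  path_intersection_is_path_general V G hG root F Gp hF hGp hFne hGne hint
end

section
/- Let Γ be a finite rooted tree with edges directed away from the root and let t ≥ 2. Then Δ_t(Γ) is a simplicial tree: it is connected and every nonempty subcomplex generated by a subset of its facets contains a leaf. Equivalently, for every nonempty collection {G_1,…,G_k} of vertex sets of directed paths of length t in Γ, there exists an index i and, if k ≥ 2, an index j ≠ i, such that G_i ∩ G_m ⊆ G_i ∩ G_j for all m ≠ i. -/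
open MvPolynomial CategoryTheory

section Complex

variable {V : Type} [DecidableEq V]

/-- A leaf of the simplicial complex whose facet set is `Fs`: a facet `F` which either is
the only facet, or for which there is a facet `G ≠ F` with `F ∩ F' ⊆ F ∩ G` for every
facet `F' ≠ F`. -/
def IsComplexLeaf (Fs : Set (Finset V)) (F : Finset V) : Prop :=
  F ∈ Fs ∧ ((∀ F' ∈ Fs, F' = F) ∨
    ∃ G ∈ Fs, G ≠ F ∧ ∀ F' ∈ Fs, F' ≠ F → F ∩ F' ⊆ F ∩ G)

/-- Connectedness of a (pure) simplicial complex given by its facet set: any two facets are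
joined by a chain of facets with consecutive nonempty intersections. -/
def ComplexConnected (Fs : Set (Finset V)) : Prop :=
  ∀ F ∈ Fs, ∀ F' ∈ Fs, ∃ c : List (Finset V), (∀ S ∈ c, S ∈ Fs) ∧
    c.head? = some F ∧ c.getLast? = some F' ∧ c.Chain' (fun A B => (A ∩ B).Nonempty)

/-- A proper chain of facets from `F` to `F'`: a sequence of distinct facets starting at `F`
and ending at `F'`, with consecutive intersections nonempty of cardinality one less than a
facet. -/
def IsProperChain (Fs : Set (Finset V)) (F F' : Finset V) (c : List (Finset V)) : Prop :=
  c.Nodup ∧ (∀ S ∈ c, S ∈ Fs) ∧ c.head? = some F ∧ c.getLast? = some F' ∧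
    c.Chain' (fun A B => (A ∩ B).Nonempty) ∧ c.Chain' (fun A B => (A ∩ B).card = B.card - 1)

/-- An irredundant proper chain: a proper chain from `F` to `F'` no proper subsequence of
which is a proper chain from `F` to `F'`. -/
def IsIrredundantProperChain (Fs : Set (Finset V)) (F F' : Finset V) (c : List (Finset V)) :
    Prop :=
  IsProperChain Fs F F' c ∧ ∀ c', c'.Sublist c → c' ≠ c → ¬ IsProperChain Fs F F' c'

/-- The distance between two facets: the minimal length of a proper irredundant chain from
`F` to `F'` (`∞` if there is none). -/
noncomputable def facetDist (Fs : Set (Finset V)) (F F' : Finset V) : ℕ∞ :=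
  sInf {m : ℕ∞ | ∃ c : List (Finset V), IsIrredundantProperChain Fs F F' c ∧
    m = ((c.length - 1 : ℕ) : ℕ∞)}

/-- A pure simplicial complex with facets of dimension `d` (given by its facet set `Fs`) is
properly-connected if `dist(F,F') = (d+1) - |F ∩ F'|` for all facets `F`, `F'` with
`F ∩ F' ≠ ∅`. -/
def ProperlyConnected (Fs : Set (Finset V)) (d : ℕ) : Prop :=
  ∀ F ∈ Fs, ∀ F' ∈ Fs, (F ∩ F').Nonempty →
    facetDist Fs F F' = (((d + 1) - (F ∩ F').card : ℕ) : ℕ∞)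

end Complex


/-!
Along a directed path the level rises by one at each step, and in a tree every non-root vertex
has a unique parent; so two directed paths through a vertex `w` agree on the ancestors of `w`
as far up as both reach. Take a facet `F` of the family whose top vertex is as deep as possible.
Every other facet `A` of the family starts no lower than `F`, so `F ∩ A` contains, with any of
its vertices, all vertices of `F` above it: it is an initial segment of `F`. Initial segments
are nested, hence the facet meeting `F` in the most vertices witnesses that `F` is a leaf.
For connectivity, sliding a path one step towards the root keeps a common vertex, so every facet
is chained to one through the root, and any two of those meet.
-/

open SimpleGraph

theorem List.IsChain.getElem_sub_eq_of_leftUnique {α : Type*} {R : α → α → Prop}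
    (hR : Relator.LeftUnique R) {l l' : List α} (hl : l.IsChain R) (hl' : l'.IsChain R)
    {i j d : ℕ} (hi : i < l.length) (hj : j < l'.length) (h : l[i] = l'[j])
    (hdi : d ≤ i) (hdj : d ≤ j) : l[i - d] = l'[j - d] := by
  induction d with
  | zero => simpa using h
  | succ d ih =>
    have hstep := hl.getElem (i - (d + 1)) (by omega)
    have hstep' := hl'.getElem (j - (d + 1)) (by omega)
    simp only [show i - (d + 1) + 1 = i - d by omega, show j - (d + 1) + 1 = j - d by omega,
      ih (by omega) (by omega)] at hstep hstep'
    exact hR hstep hstep'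

section RootedTree

variable {V : Type} {G : SimpleGraph V} {root : V}

theorem exists_dirAdj_of_dist_ne_zero {v : V} (hv : G.dist root v ≠ 0) :
    ∃ u, dirAdj G root u v := by
  obtain ⟨p, hp⟩ := exists_walk_of_dist_ne_zero hv
  have hnil : ¬ p.Nil := by rw [← Walk.length_eq_zero_iff, hp]; exact hv
  refine ⟨p.penultimate, p.adj_penultimate hnil, ?_⟩
  have hle := dist_le p.dropLast
  have hlen := p.length_dropLast_add_one hnil
  have := (p.adj_penultimate hnil).diff_dist_adj (u := root)
  omega

theorem dirAdj_leftUnique (hG : G.IsTree) : Relator.LeftUnique (dirAdj G root) := by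
  rintro u u' v ⟨hadj, hd⟩ ⟨hadj', hd'⟩
  obtain ⟨p, hp⟩ := hG.connected.exists_walk_length_eq_dist root u
  obtain ⟨p', hp'⟩ := hG.connected.exists_walk_length_eq_dist root u'
  have hpath : (p.concat hadj).IsPath :=
    (p.concat hadj).isPath_of_length_eq_dist (by rw [Walk.length_concat, hp, hd])
  have hpath' : (p'.concat hadj').IsPath :=
    (p'.concat hadj').isPath_of_length_eq_dist (by rw [Walk.length_concat, hp', hd'])
  exact (Walk.concat_inj ((hG.existsUnique_path root v).unique hpath hpath')).1

theorem IsDirPath.dist_getElem {p : List V} (hp : IsDirPath G root p) {i : ℕ}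
    (hi : i < p.length) : G.dist root p[i] = G.dist root (p[0]'(by omega)) + i := by
  induction i with
  | zero => rfl
  | succ i ih => rw [(hp.getElem i hi).2, ih (by omega), Nat.add_assoc]

theorem IsDirPath.mem_of_mem_of_dist_le (hG : G.IsTree) {p q : List V}
    (hp : IsDirPath G root p) (hq : IsDirPath G root q) {u w : V} (hu : u ∈ p) (hwp : w ∈ p)
    (hwq : w ∈ q) (huw : G.dist root u ≤ G.dist root w)
    (hqu : ∃ v ∈ q, G.dist root v ≤ G.dist root u) : u ∈ q := by
  obtain ⟨v, hv, hvu⟩ := hqu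
  obtain ⟨i, hi, rfl⟩ := List.getElem_of_mem hu
  obtain ⟨j, hj, rfl⟩ := List.getElem_of_mem hwp
  obtain ⟨k, hk, hkj⟩ := List.getElem_of_mem hwq
  obtain ⟨l, hl, rfl⟩ := List.getElem_of_mem hv
  have hi_lev := hp.dist_getElem hi
  have hj_lev := hp.dist_getElem hj
  have hk_lev := hq.dist_getElem hk
  have hl_lev := hq.dist_getElem hl
  rw [hkj] at hk_lev
  -- `u` sits `j - i` steps above `w` on `p`, and `q` reaches at least that far above `w`
  have hanc := List.IsChain.getElem_sub_eq_of_leftUnique (dirAdj_leftUnique hG) hp hq hj hk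
    hkj.symm (d := j - i) (by omega) (by omega)
  simp only [show j - (j - i) = i by omega] at hanc
  exact hanc ▸ List.getElem_mem _

end RootedTree

section Complex

variable {V : Type} [DecidableEq V]

theorem Finset.inter_subset_or_subset_of_forall_le {β : Type*} [LinearOrder β] (f : V → β)
    {F A B : Finset V} (hA : ∀ w ∈ F ∩ A, ∀ u ∈ F, f u ≤ f w → u ∈ A)
    (hB : ∀ w ∈ F ∩ B, ∀ u ∈ F, f u ≤ f w → u ∈ B) : F ∩ A ⊆ F ∩ B ∨ F ∩ B ⊆ F ∩ A := by
  by_contra! h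
  obtain ⟨⟨a, ha, haB⟩, ⟨b, hb, hbA⟩⟩ := And.imp Finset.not_subset.mp Finset.not_subset.mp h
  rw [Finset.mem_inter] at ha hb haB hbA
  rcases le_total (f a) (f b) with hab | hba
  · exact haB ⟨ha.1, hB b (Finset.mem_inter.mpr hb) a ha.1 hab⟩
  · exact hbA ⟨hb.1, hA a (Finset.mem_inter.mpr ha) b hb.1 hba⟩

theorem isComplexLeaf_of_inter_total {S : Set (Finset V)} (hS : S.Finite) {F : Finset V}
    (hF : F ∈ S) (htotal : ∀ A ∈ S, ∀ B ∈ S, F ∩ A ⊆ F ∩ B ∨ F ∩ B ⊆ F ∩ A) :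
    IsComplexLeaf S F := by
  refine ⟨hF, or_iff_not_imp_left.mpr fun hall => ?_⟩
  obtain ⟨A₀, hA₀S, hA₀F⟩ : ∃ A₀ ∈ S, A₀ ≠ F := by simpa using hall
  obtain ⟨B, ⟨hBS, hBF⟩, hBmax⟩ := Set.exists_max_image (S \ {F}) (fun A => (F ∩ A).card)
    (hS.subset Set.sdiff_subset) ⟨A₀, hA₀S, hA₀F⟩
  refine ⟨B, hBS, hBF, fun A hAS hAF => ?_⟩
  rcases htotal A hAS B hBS with hAB | hBA
  · exact hAB
  · exact (Finset.eq_of_subset_of_card_le hBA (hBmax A ⟨hAS, hAF⟩)).symm.subset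

def FacetAdj (Fs : Set (Finset V)) (A B : Finset V) : Prop :=
  A ∈ Fs ∧ B ∈ Fs ∧ (A ∩ B).Nonempty

instance (Fs : Set (Finset V)) : Std.Symm (FacetAdj Fs) where
  symm _ _ h := ⟨h.2.1, h.1, by rw [Finset.inter_comm]; exact h.2.2⟩

theorem complexConnected_of_reflTransGen {Fs : Set (Finset V)}
    (h : ∀ F ∈ Fs, ∀ F' ∈ Fs, Relation.ReflTransGen (FacetAdj Fs) F F') :
    ComplexConnected Fs := by
  intro F hF F' hF'
  obtain ⟨l, hl, hlast⟩ := List.exists_isChain_cons_of_relationReflTransGen (h F hF F' hF')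
  refine ⟨F :: l, hl.induction (· ∈ Fs) _ (fun _ _ hAB _ => hAB.2.1) (fun _ => hF), rfl, ?_,
    hl.imp fun _ _ hAB => hAB.2.2⟩
  rw [List.getLast?_eq_some_getLast (List.cons_ne_nil _ _), hlast]

end Complex

section PathComplex

variable {V : Type} [DecidableEq V] {G : SimpleGraph V} {root : V} {t : ℕ}

theorem mem_of_mem_inter_of_dist_le (hG : G.IsTree) {F A : Finset V}
    (hF : F ∈ pathFacets G root t) (hA : A ∈ pathFacets G root t)
    (htop : sInf (G.dist root '' A) ≤ sInf (G.dist root '' F)) :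
    ∀ w ∈ F ∩ A, ∀ u ∈ F, G.dist root u ≤ G.dist root w → u ∈ A := by
  obtain ⟨p, hp, -, rfl⟩ := hF
  obtain ⟨q, hq, -, rfl⟩ := hA
  intro w hw u hu huw
  rw [Finset.mem_inter] at hw
  obtain ⟨v, hv, hv_top⟩ := Nat.sInf_mem (Set.Nonempty.image (G.dist root) ⟨w, hw.2⟩)
  have hu_top := Nat.sInf_le (Set.mem_image_of_mem (G.dist root) (Finset.mem_coe.mpr hu))
  simp only [List.mem_toFinset, Finset.mem_coe] at hw hu hv ⊢
  exact hp.mem_of_mem_of_dist_le hG hq hu hw.1 hw.2 huw ⟨v, hv, by omega⟩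

theorem exists_reflTransGen_facetAdj_root_mem (hG : G.IsTree) (ht : 2 ≤ t) {F : Finset V}
    (hF : F ∈ pathFacets G root t) :
    ∃ R ∈ pathFacets G root t, root ∈ R ∧
      Relation.ReflTransGen (FacetAdj (pathFacets G root t)) F R := by
  obtain ⟨_ | ⟨x, p⟩, hp, hlen, rfl⟩ := hF
  · simp at hlen; omega
  obtain ⟨n, hn⟩ : ∃ n, G.dist root x = n := ⟨_, rfl⟩
  induction n generalizing x p with
  | zero =>
    obtain rfl := hG.connected.dist_eq_zero_iff.mp hn
    exact ⟨_, ⟨_, hp, hlen, rfl⟩, by simp, .refl⟩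
  | succ n ih =>
    obtain ⟨u, hu⟩ := exists_dirAdj_of_dist_ne_zero (by omega : G.dist root x ≠ 0)
    obtain _ | ⟨b, p⟩ := p
    · simp at hlen; omega
    have hq : IsDirPath G root (u :: x :: (b :: p).dropLast) :=
      List.isChain_cons_cons.mpr
        ⟨hu, List.dropLast_cons_cons (x := x) ▸ hp.prefix (List.dropLast_prefix _)⟩
    have hq_len : (u :: x :: (b :: p).dropLast).length = t := by simp at hlen ⊢; omega
    obtain ⟨R, hR, hroot, hqR⟩ := ih u _ hq hq_len (by have := hu.2; omega)
    exact ⟨R, hR, hroot, .head ⟨⟨_, hp, hlen, rfl⟩, ⟨_, hq, hq_len, rfl⟩, x, by simp⟩ hqR⟩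

theorem pathFacets_complexConnected (hG : G.IsTree) (ht : 2 ≤ t) :
    ComplexConnected (pathFacets G root t) := by
  refine complexConnected_of_reflTransGen fun F hF F' hF' => ?_
  obtain ⟨R, hR, hroot, hFR⟩ := exists_reflTransGen_facetAdj_root_mem hG ht hF
  obtain ⟨R', hR', hroot', hF'R'⟩ := exists_reflTransGen_facetAdj_root_mem hG ht hF'
  exact hFR.trans (.head ⟨hR, hR', root, Finset.mem_inter.mpr ⟨hroot, hroot'⟩⟩ (symm hF'R'))

end PathComplex

/-- For a finite rooted tree `Γ` and `t ≥ 2`, the simplicial complex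
`Δ_t(Γ)` is a simplicial tree: it is connected, and every nonempty subcomplex generated by a
subset of its facets contains a leaf. -/
theorem pathComplex_is_simplicial_tree
    (V : Type) [Fintype V] [DecidableEq V] (G : SimpleGraph V) (hG : G.IsTree) (root : V)
    (t : ℕ) (ht : 2 ≤ t) :
    ComplexConnected (pathFacets G root t) ∧
      ∀ S : Set (Finset V), S ⊆ pathFacets G root t → S.Nonempty →
        ∃ F, IsComplexLeaf S F := by
  refine ⟨pathFacets_complexConnected hG ht, fun S hS hne => ?_⟩
  -- a facet whose top vertex is as deep as possible
  obtain ⟨F, hF, hF_max⟩ :=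
    Set.exists_max_image S (fun F => sInf (G.dist root '' F)) S.toFinite hne
  have hclosed A (hA : A ∈ S) :=
    mem_of_mem_inter_of_dist_le hG (hS hF) (hS hA) (hF_max A hA)
  exact ⟨F, isComplexLeaf_of_inter_total S.toFinite hF fun A hA B hB =>
    Finset.inter_subset_or_subset_of_forall_le _ (hclosed A hA) (hclosed B hB)⟩
end

section
/- Let Γ be a finite rooted tree with edges directed away from the root, let t ≥ 2, and suppose Δ_t(Γ) is properly-connected. Let w = x_{i_1}⋯x_{i_t} be a minimal generator of I_t(Γ) with x_{i_t} a leaf of Γ, let F = {x_{i_1},…,x_{i_t}}, let Y = {y_1,…,y_a} be the union of G \ F over all facets G of Δ_t(Γ) with |G ∩ F| = t − 1, and let Z = Y ∪ F. Set Γ' = Γ \ {x_{i_t}} and Γ'' = Γ \ Z. Then the ideal equality I_t(Γ') ∩ (w) = w·(y_1,…,y_a) + w·I_t(Γ'') holds in R = k[x_1,…,x_n]. -/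
open MvPolynomial CategoryTheory

/-!
Both sides are monomial ideals, so writing `F` for the vertex set of `p`, the inclusion `⊆`
reduces to a statement about paths: a directed path `q` of length `t` that avoids the leaf
`x_{i_t}` but meets `F` passes through a vertex of `Y`. Let `q_c = p_j` be the last vertex of `q`
lying on `p`. In a tree, `q` and `p` share all ancestors of this vertex. If `j < c`, then `q`
contains the parent of `p_0`, which lies in `Y`; `j = t - 1` is impossible as `q` avoids
`p_{t-1}`; if `j = t - 2`, then `q_{c+1}` is a child of `p_{t-2}` off `p`, which lies in `Y`.
If `j ≤ t - 3`, no facet meets both tails `{p_{j+1}, …}` and `{q_{c+1}, …}`, so every proper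
chain from `F` to `q` has at least `t - c` steps, whereas proper connectedness gives the distance
`t - |F ∩ q| ≤ t - c - 1`.

For `⊇`, a facet `G'` with `|G' ∩ F| = t - 1` misses the leaf (`p` is the only path of length `t`
through it), and its monomial divides `w y` for `y ∈ G' \ F`.
-/

theorem List.mem_iff_exists_getD {α : Type*} {l : List α} {a d : α} :
    a ∈ l ↔ ∃ i < l.length, l.getD i d = a := by
  rw [List.mem_iff_getElem]
  constructor
  · rintro ⟨i, hi, rfl⟩
    exact ⟨i, hi, List.getD_eq_getElem _ _ hi⟩
  · rintro ⟨i, hi, rfl⟩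
    exact ⟨i, hi, (List.getD_eq_getElem _ _ hi).symm⟩

theorem List.getD_mem {α : Type*} {l : List α} {i : ℕ} (d : α) (hi : i < l.length) :
    l.getD i d ∈ l :=
  List.mem_iff_exists_getD.mpr ⟨i, hi, rfl⟩

theorem List.image_getD_subset_toFinset {α : Type*} [DecidableEq α] {l : List α} (d : α)
    {s : Finset ℕ} (hs : ∀ i ∈ s, i < l.length) : s.image (l.getD · d) ⊆ l.toFinset := by
  intro v hv
  obtain ⟨i, hi, rfl⟩ := Finset.mem_image.mp hv
  exact List.mem_toFinset.mpr (List.getD_mem d (hs i hi))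

section DirectedPath

variable {V : Type} {G : SimpleGraph V} {root : V}

namespace IsDirPath

theorem dirAdj_getD {q : List V} (hq : IsDirPath G root q) {i : ℕ} (hi : i + 1 < q.length) :
    dirAdj G root (q.getD i root) (q.getD (i + 1) root) := by
  rw [List.getD_eq_getElem _ _ (by omega), List.getD_eq_getElem _ _ hi]
  exact List.isChain_iff_getElem.mp hq i hi

theorem dist_getD {q : List V} (hq : IsDirPath G root q) {i : ℕ} (hi : i < q.length) :
    G.dist root (q.getD i root) = G.dist root (q.getD 0 root) + i := by
  induction i with
  | zero => rfl
  | succ i ih => rw [(hq.dirAdj_getD hi).2, ih (by omega), add_assoc]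

theorem eq_of_getD_eq {q : List V} (hq : IsDirPath G root q) {i j : ℕ} (hi : i < q.length)
    (hj : j < q.length) (h : q.getD i root = q.getD j root) : i = j := by
  have := hq.dist_getD hi
  rw [h, hq.dist_getD hj] at this
  omega

theorem nodup_s6 {q : List V} (hq : IsDirPath G root q) : q.Nodup := by
  refine List.nodup_iff_injective_get.mpr fun ⟨i, hi⟩ ⟨j, hj⟩ h => Fin.ext ?_
  refine hq.eq_of_getD_eq hi hj ?_
  rwa [List.getD_eq_getElem _ _ hi, List.getD_eq_getElem _ _ hj]

theorem card_image_getD [DecidableEq V] {q : List V} (hq : IsDirPath G root q) {s : Finset ℕ}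
    (hs : ∀ i ∈ s, i < q.length) : (s.image (q.getD · root)).card = s.card :=
  Finset.card_image_of_injOn fun _ hi _ hj h => hq.eq_of_getD_eq (hs _ hi) (hs _ hj) h

end IsDirPath

theorem SimpleGraph.IsTree.eq_of_dirAdj (hG : G.IsTree) {u u' v : V} (h : dirAdj G root u v)
    (h' : dirAdj G root u' v) : u = u' := by
  classical
  have hpath : ∀ {x}, dirAdj G root x v → ∃ P : G.Walk v root, P.IsPath ∧ P.getVert 1 = x := by
    intro x hx
    obtain ⟨W, hW⟩ := hG.connected.exists_walk_length_eq_dist root x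
    have hv : v ∉ W.support := fun hv => by
      have := W.length_takeUntil_le_length hv
      have := SimpleGraph.dist_le (W.takeUntil v hv)
      have := hx.2
      omega
    refine ⟨.cons hx.1.symm W.reverse, ?_, by simp⟩
    exact (W.isPath_of_length_eq_dist hW).reverse.cons (by simpa using hv)
  obtain ⟨P, hP, rfl⟩ := hpath h
  obtain ⟨P', hP', rfl⟩ := hpath h'
  rw [(hG.existsUnique_path v root).unique hP hP']

namespace IsDirPath

variable {a b : List V}

/-- In a tree, directed paths through a common vertex share its ancestors. -/
theorem getD_sub_eq_of_getD_eq (hG : G.IsTree) (ha : IsDirPath G root a)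
    (hb : IsDirPath G root b) {α β : ℕ} (hα : α < a.length) (hβ : β < b.length)
    (hab : a.getD α root = b.getD β root) {r : ℕ} (hrα : r ≤ α) (hrβ : r ≤ β) :
    a.getD (α - r) root = b.getD (β - r) root := by
  induction r with
  | zero => exact hab
  | succ r ih =>
    have ha' := ha.dirAdj_getD (i := α - (r + 1)) (by omega)
    have hb' := hb.dirAdj_getD (i := β - (r + 1)) (by omega)
    rw [show α - (r + 1) + 1 = α - r by omega, ih (by omega) (by omega)] at ha'
    rw [show β - (r + 1) + 1 = β - r by omega] at hb'
    exact hG.eq_of_dirAdj ha' hb'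

theorem eq_of_length_eq_of_getD_last_eq (hG : G.IsTree) (ha : IsDirPath G root a)
    (hb : IsDirPath G root b) (hlen : a.length = b.length)
    (hlast : a.getD (a.length - 1) root = b.getD (b.length - 1) root) : a = b := by
  refine List.ext_get hlen fun i hi hi' => ?_
  have := getD_sub_eq_of_getD_eq hG ha hb (by omega) (by omega) hlast
    (r := a.length - 1 - i) (by omega) (by omega)
  rwa [show a.length - 1 - (a.length - 1 - i) = i by omega,
    show b.length - 1 - (a.length - 1 - i) = i by omega, List.getD_eq_get _ _ ⟨i, hi⟩,
    List.getD_eq_get _ _ ⟨i, hi'⟩] at this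

theorem eq_of_mem_of_graphLeaf (hG : G.IsTree) (ha : IsDirPath G root a)
    (hb : IsDirPath G root b) (hlen : b.length = a.length) {x : V} (hx : a.getLast? = some x)
    (hleaf : graphLeaf G x) (hxb : x ∈ b) : b = a := by
  obtain ⟨s, hs, rfl⟩ := (List.mem_iff_exists_getD (d := root)).mp hxb
  have hxa : a.getD (a.length - 1) root = b.getD s root := by
    rw [List.getD_eq_getElem?_getD, ← List.getLast?_eq_getElem?, hx]
    rfl
  have hs' : s = b.length - 1 := by
    by_contra hne
    -- the neighbours of the leaf after it on `b` and before it on `a` coincide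
    have hb' := hb.dirAdj_getD (i := s) (by omega)
    have ha' := ha.dirAdj_getD (i := a.length - 2) (by omega)
    rw [show a.length - 2 + 1 = a.length - 1 by omega, hxa] at ha'
    obtain ⟨u, -, hu⟩ := hleaf
    have hb'' := hb'.2
    have ha'' := ha'.2
    rw [hu _ hb'.1] at hb''
    rw [hu _ ha'.1.symm] at ha''
    omega
  exact eq_of_length_eq_of_getD_last_eq hG hb ha hlen (by rw [← hs', hxa])

end IsDirPath

end DirectedPath

section AdjacentFacets

variable {V : Type} [DecidableEq V] {G : SimpleGraph V} {root : V}

theorem card_of_mem_pathFacets {t : ℕ} {S : Finset V} (hS : S ∈ pathFacets G root t) :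
    S.card = t := by
  obtain ⟨q, hq, rfl, rfl⟩ := hS
  exact List.toFinset_card_of_nodup hq.nodup_s6

def adjFacetVertices (G : SimpleGraph V) (root : V) (t : ℕ) (F : Finset V) : Set V :=
  {y | ∃ G' ∈ pathFacets G root t, (G' ∩ F).card = t - 1 ∧ y ∈ G' \ F}

theorem notMem_of_mem_adjFacetVertices {t : ℕ} {F : Finset V} {y : V}
    (hy : y ∈ adjFacetVertices G root t F) : y ∉ F := by
  obtain ⟨_, -, -, hy⟩ := hy
  exact (Finset.mem_sdiff.mp hy).2

variable {p q : List V}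

theorem mem_adjFacetVertices_of_dropLast_subset (hp : IsDirPath G root p)
    (hq : IsDirPath G root q) (hlen : q.length = p.length) (hsub : p.dropLast ⊆ q) {y : V}
    (hyq : y ∈ q) (hyp : y ∉ p) : y ∈ adjFacetVertices G root p.length p.toFinset := by
  have hlower : p.dropLast.toFinset ⊆ q.toFinset ∩ p.toFinset := fun v hv => by
    rw [List.mem_toFinset] at hv
    exact Finset.mem_inter.mpr ⟨List.mem_toFinset.mpr (hsub hv),
      List.mem_toFinset.mpr (List.dropLast_subset p hv)⟩
  have hupper : q.toFinset ∩ p.toFinset ⊂ q.toFinset :=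
    (Finset.ssubset_iff_of_subset Finset.inter_subset_left).mpr
      ⟨y, List.mem_toFinset.mpr hyq, fun h => hyp (List.mem_toFinset.mp (Finset.mem_inter.mp h).2)⟩
  have h1 := Finset.card_le_card hlower
  have h2 := Finset.card_lt_card hupper
  rw [List.toFinset_card_of_nodup (hp.nodup_s6.sublist (List.dropLast_sublist p)),
    List.length_dropLast] at h1
  rw [List.toFinset_card_of_nodup hq.nodup_s6] at h2
  exact ⟨q.toFinset, ⟨q, hq, hlen, rfl⟩, by omega,
    Finset.mem_sdiff.mpr ⟨List.mem_toFinset.mpr hyq, mt List.mem_toFinset.mp hyp⟩⟩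

theorem parent_mem_adjFacetVertices (hp : IsDirPath G root p) (hp0 : p ≠ []) {u : V}
    (hu : dirAdj G root u (p.getD 0 root)) : u ∈ adjFacetVertices G root p.length p.toFinset := by
  have hup : u ∉ p := fun h => by
    obtain ⟨i, hi, hiu⟩ := (List.mem_iff_exists_getD (d := root)).mp h
    have := hp.dist_getD hi
    rw [hiu, hu.2] at this
    omega
  have hpath : IsDirPath G root (u :: p.dropLast) := by
    refine List.IsChain.cons hp.dropLast fun v hv => ?_
    rw [List.head?_dropLast] at hv
    split_ifs at hv
    · obtain ⟨w, p', rfl⟩ := List.exists_cons_of_ne_nil hp0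
      simp only [List.head?_cons, Option.mem_def, Option.some.injEq] at hv
      exact hv ▸ hu
    · simp at hv
  refine mem_adjFacetVertices_of_dropLast_subset hp hpath ?_ (List.subset_cons_self _ _)
    List.mem_cons_self hup
  simp only [List.length_cons, List.length_dropLast]
  have := List.length_pos_iff.mpr hp0
  omega

theorem child_mem_adjFacetVertices (hp : IsDirPath G root p) (hp2 : 2 ≤ p.length) {y : V}
    (hy : dirAdj G root (p.getD (p.length - 2) root) y) (hyp : y ∉ p) :
    y ∈ adjFacetVertices G root p.length p.toFinset := by
  have hpath : IsDirPath G root (p.dropLast ++ [y]) := by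
    refine List.IsChain.append hp.dropLast (List.isChain_singleton y) fun v hv w hw => ?_
    rw [List.getLast?_dropLast, if_neg (by omega), List.getElem?_eq_getElem (by omega),
      Option.mem_some_iff, ← List.getD_eq_getElem _ root] at hv
    rw [List.head?_cons, Option.mem_some_iff] at hw
    exact hv ▸ hw ▸ hy
  refine mem_adjFacetVertices_of_dropLast_subset hp hpath ?_ (List.subset_append_left _ _)
    (List.mem_append_right _ (List.mem_singleton_self y)) hyp
  simp only [List.length_append, List.length_dropLast, List.length_singleton]
  omega

end AdjacentFacets

theorem List.IsChain.getLast_le_head_add {α : Type*} {f : α → ℕ} :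
    ∀ {l : List α}, l.IsChain (fun a b => f b ≤ f a + 1) → ∀ hl : l ≠ [],
      f (l.getLast hl) ≤ f (l.head hl) + (l.length - 1)
  | [], _, hl => absurd rfl hl
  | [_], _, _ => by simp
  | a :: b :: l, h, _ => by
    rw [List.isChain_cons_cons] at h
    have := List.IsChain.getLast_le_head_add h.2 (List.cons_ne_nil b l)
    simp only [List.getLast_cons_cons, List.head_cons, List.length_cons] at this ⊢
    omega

section ProperChain

variable {V : Type} [DecidableEq V]

theorem Finset.card_inter_le_card_inter_add_one {A B : Finset V} (hAB : (A \ B).card ≤ 1)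
    (S : Finset V) : (A ∩ S).card ≤ (B ∩ S).card + 1 := by
  have hsub : A ∩ S ⊆ B ∩ S ∪ A \ B := fun v hv => by
    rw [Finset.mem_inter] at hv
    by_cases hvB : v ∈ B
    · exact Finset.mem_union_left _ (Finset.mem_inter.mpr ⟨hvB, hv.2⟩)
    · exact Finset.mem_union_right _ (Finset.mem_sdiff.mpr ⟨hv.1, hvB⟩)
  exact (Finset.card_le_card hsub).trans ((Finset.card_union_le _ _).trans (by omega))

variable {Fs : Set (Finset V)} {F Q S₁ S₂ : Finset V}

/-- The second facet of the chain still meets `S₁` (as `|S₁| ≥ 2`), hence misses `S₂`; from there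
on each step adds at most one vertex of `S₂`. -/
theorem IsProperChain.card_add_two_le_length {t : ℕ} (hFs : ∀ A ∈ Fs, A.card = t)
    {L : List (Finset V)} (hL : IsProperChain Fs F Q L) (hS₁ : S₁ ⊆ F) (hS₁card : 2 ≤ S₁.card)
    (hS₁Q : Disjoint S₁ Q) (hS₂ : S₂ ⊆ Q)
    (hsep : ∀ A ∈ Fs, (A ∩ S₁).Nonempty → Disjoint A S₂) : S₂.card + 2 ≤ L.length := by
  obtain ⟨-, hmem, hhead, hlast, -, hstep⟩ := hL
  obtain _ | ⟨F', _ | ⟨A, L'⟩⟩ := L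
  · simp at hhead
  · simp only [List.head?_cons, List.getLast?_singleton, Option.some.injEq] at hhead hlast
    subst hlast
    subst hhead
    rw [disjoint_self.mp (hS₁Q.mono_right hS₁)] at hS₁card
    simp at hS₁card
  obtain rfl : F = F' := by simpa using hhead.symm
  replace hstep := List.isChain_cons_cons.mp hstep
  have hsdiff : ∀ {B C : Finset V}, (B ∩ C).card = C.card - 1 → (C \ B).card ≤ 1 := by
    intro B C h
    rw [Finset.card_sdiff, h]
    omega
  have hA₁ : (A ∩ S₁).Nonempty := by
    have hFA : (F \ A).card ≤ 1 := by
      rw [Finset.card_sdiff, Finset.inter_comm, hstep.1,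
        hFs F (hmem F List.mem_cons_self), hFs A (hmem A (by simp))]
      omega
    have := Finset.card_inter_le_card_inter_add_one hFA S₁
    rw [Finset.inter_eq_right.mpr hS₁] at this
    exact Finset.card_pos.mp (by omega)
  have hchain : (A :: L').IsChain fun B C => (C ∩ S₂).card ≤ (B ∩ S₂).card + 1 :=
    hstep.2.imp fun B C h => Finset.card_inter_le_card_inter_add_one (hsdiff h) S₂
  have hbound := hchain.getLast_le_head_add (List.cons_ne_nil A L')
  rw [List.getLast?_eq_some_getLast (List.cons_ne_nil _ _), Option.some.injEq,
    List.getLast_cons (List.cons_ne_nil A L')] at hlast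
  rw [hlast, Finset.inter_eq_right.mpr hS₂, List.head_cons,
    Finset.disjoint_iff_inter_eq_empty.mp (hsep A (hmem A (by simp)) hA₁)] at hbound
  simp only [Finset.card_empty, List.length_cons] at hbound ⊢
  omega

theorem card_add_one_le_facetDist {t : ℕ} (hFs : ∀ A ∈ Fs, A.card = t) (hS₁ : S₁ ⊆ F)
    (hS₁card : 2 ≤ S₁.card) (hS₁Q : Disjoint S₁ Q) (hS₂ : S₂ ⊆ Q)
    (hsep : ∀ A ∈ Fs, (A ∩ S₁).Nonempty → Disjoint A S₂) :
    ((S₂.card + 1 : ℕ) : ℕ∞) ≤ facetDist Fs F Q := by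
  refine le_sInf ?_
  rintro _ ⟨L, hL, rfl⟩
  have := hL.1.card_add_two_le_length hFs hS₁ hS₁card hS₁Q hS₂ hsep
  exact_mod_cast (by omega : S₂.card + 1 ≤ L.length - 1)

end ProperChain

section Branching

variable {V : Type} {G : SimpleGraph V} {root : V} {p q : List V}

/-- Let `q` meet `p` for the last time at `q_c = p_j`. No directed path meets both the tail of `p`
after `p_j` and the tail of `q` after `q_c`: the higher of the two vertices would be an ancestor
of the lower one, lying on the other tail. -/
theorem IsDirPath.getD_notMem_of_branch (hG : G.IsTree) (hp : IsDirPath G root p)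
    (hq : IsDirPath G root q) {a : List V} (ha : IsDirPath G root a) {c j : ℕ}
    (hc : c < q.length) (hj : j < p.length) (hqc : q.getD c root = p.getD j root)
    (hqmax : ∀ n, c < n → n < q.length → q.getD n root ∉ p) {m n : ℕ} (hm : j < m)
    (hmp : m < p.length) (hn : c < n) (hnq : n < q.length) (hma : p.getD m root ∈ a) :
    q.getD n root ∉ a := by
  intro hna
  obtain ⟨α, hα, hαm⟩ := (List.mem_iff_exists_getD (d := root)).mp hma
  obtain ⟨β, hβ, hβn⟩ := (List.mem_iff_exists_getD (d := root)).mp hna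
  have haα := ha.dist_getD hα
  have haβ := ha.dist_getD hβ
  have hpm := hp.dist_getD hmp
  have hpj := hp.dist_getD hj
  have hqn := hq.dist_getD hnq
  have hqc' := hq.dist_getD hc
  rw [hαm] at haα
  rw [hβn] at haβ
  rw [hqc] at hqc'
  rcases le_or_gt α β with hαβ | hβα
  · have h := ha.getD_sub_eq_of_getD_eq hG hq hβ hnq hβn (r := β - α) (by omega) (by omega)
    rw [show β - (β - α) = α by omega, hαm] at h
    exact hqmax (n - (β - α)) (by omega) (by omega) (h ▸ List.getD_mem root hmp)
  · have h := ha.getD_sub_eq_of_getD_eq hG hp hα hmp hαm (r := α - β) (by omega) (by omega)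
    rw [show α - (α - β) = β by omega, hβn] at h
    exact hqmax n hn hnq (h ▸ List.getD_mem root (by omega))

theorem IsDirPath.image_range_subset_toFinset [DecidableEq V] (hG : G.IsTree)
    (hp : IsDirPath G root p) (hq : IsDirPath G root q) {c j : ℕ} (hcj : c ≤ j)
    (hc : c < q.length) (hj : j < p.length) (hqc : q.getD c root = p.getD j root) :
    (Finset.range (c + 1)).image (q.getD · root) ⊆ p.toFinset := by
  intro v hv
  obtain ⟨r, hr, rfl⟩ := Finset.mem_image.mp hv
  rw [Finset.mem_range] at hr
  have h := hq.getD_sub_eq_of_getD_eq hG hp hc hj hqc (r := c - r) (by omega) (by omega)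
  rw [show c - (c - r) = r by omega] at h
  exact h ▸ List.mem_toFinset.mpr (List.getD_mem root (by omega))

theorem IsDirPath.disjoint_image_Ioo_toFinset [DecidableEq V] (hp : IsDirPath G root p)
    (hq : IsDirPath G root q) {c j : ℕ} (hc : c < q.length) (hj : j < p.length)
    (hqc : q.getD c root = p.getD j root)
    (hqmax : ∀ n, c < n → n < q.length → q.getD n root ∉ p) :
    Disjoint ((Finset.Ioo j p.length).image (p.getD · root)) q.toFinset := by
  refine Finset.disjoint_left.mpr fun v hv hvq => ?_
  obtain ⟨m, hm, rfl⟩ := Finset.mem_image.mp hv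
  obtain ⟨n, hn, hnm⟩ := (List.mem_iff_exists_getD (d := root)).mp (List.mem_toFinset.mp hvq)
  rw [Finset.mem_Ioo] at hm
  have hpm := hp.dist_getD hm.2
  have hpj := hp.dist_getD hj
  have hqn := hq.dist_getD hn
  have hqc' := hq.dist_getD hc
  rw [hnm] at hqn
  rw [hqc] at hqc'
  exact hqmax n (by omega) hn (hnm ▸ List.getD_mem root hm.2)

theorem false_of_branch_of_properlyConnected [DecidableEq V] (hG : G.IsTree) {t : ℕ}
    (hPC : ProperlyConnected (pathFacets G root t) (t - 1)) (hp : IsDirPath G root p)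
    (hq : IsDirPath G root q) (hplen : p.length = t) (hqlen : q.length = t) {c j : ℕ}
    (hcj : c ≤ j) (hjt : j + 3 ≤ t) (hqc : q.getD c root = p.getD j root)
    (hqmax : ∀ n, c < n → n < t → q.getD n root ∉ p) : False := by
  subst hplen
  have hqmax' : ∀ n, c < n → n < q.length → q.getD n root ∉ p := hqlen ▸ hqmax
  set S₁ := (Finset.Ioo j p.length).image (p.getD · root)
  set S₂ := (Finset.Ioo c p.length).image (q.getD · root)
  set I := (Finset.range (c + 1)).image (q.getD · root)
  have hsep : ∀ A ∈ pathFacets G root p.length, (A ∩ S₁).Nonempty → Disjoint A S₂ := by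
    rintro _ ⟨a, ha, -, rfl⟩ ⟨v, hv⟩
    obtain ⟨hva, hvS₁⟩ := Finset.mem_inter.mp hv
    obtain ⟨m, hm, rfl⟩ := Finset.mem_image.mp hvS₁
    rw [Finset.mem_Ioo] at hm
    refine Finset.disjoint_right.mpr fun w hw hwa => ?_
    obtain ⟨n, hn, rfl⟩ := Finset.mem_image.mp hw
    rw [Finset.mem_Ioo] at hn
    exact hp.getD_notMem_of_branch hG hq ha (by omega) (by omega) hqc hqmax' hm.1 hm.2 hn.1
      (by omega) (List.mem_toFinset.mp hva) (List.mem_toFinset.mp hwa)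
  have hdist := card_add_one_le_facetDist (fun _ => card_of_mem_pathFacets)
    (List.image_getD_subset_toFinset root fun i hi => (Finset.mem_Ioo.mp hi).2)
    (by rw [hp.card_image_getD fun i hi => (Finset.mem_Ioo.mp hi).2]; simp; omega)
    (hp.disjoint_image_Ioo_toFinset hq (by omega) (by omega) hqc hqmax')
    (List.image_getD_subset_toFinset root fun i hi => by simp at hi; omega) hsep
  have hI : I ⊆ p.toFinset ∩ q.toFinset :=
    Finset.subset_inter (hp.image_range_subset_toFinset hG hq hcj (by omega) (by omega) hqc)
      (List.image_getD_subset_toFinset root fun i hi => by simp at hi; omega)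
  have hI_card : I.card = c + 1 := by
    rw [hq.card_image_getD fun i hi => by simp at hi; omega, Finset.card_range]
  have := Finset.card_le_card hI
  rw [hPC _ ⟨p, hp, rfl, rfl⟩ _ ⟨q, hq, hqlen, rfl⟩ (Finset.card_pos.mp (by omega)),
    hq.card_image_getD fun i hi => by simp at hi; omega, Nat.card_Ioo, Nat.cast_le] at hdist
  omega

theorem exists_mem_adjFacetVertices [DecidableEq V] (hG : G.IsTree) {t : ℕ}
    (hPC : ProperlyConnected (pathFacets G root t) (t - 1)) (hp : IsDirPath G root p)
    (hplen : p.length = t) {x : V} (hx : p.getLast? = some x) (hq : IsDirPath G root q)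
    (hqlen : q.length = t) (hxq : x ∉ q) (hpq : ∃ v ∈ q, v ∈ p) :
    ∃ y ∈ q, y ∈ adjFacetVertices G root t p.toFinset := by
  obtain ⟨_, hvq, hvp⟩ := hpq
  obtain ⟨s, hs, rfl⟩ := (List.mem_iff_exists_getD (d := root)).mp hvq
  set c := Nat.findGreatest (fun r => q.getD r root ∈ p) (t - 1)
  have hcp : q.getD c root ∈ p :=
    Nat.findGreatest_spec (P := fun r => q.getD r root ∈ p) (m := s) (n := t - 1) (by omega) hvp
  have hct : c < t := (Nat.findGreatest_le _).trans_lt (by omega)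
  have hqmax : ∀ n, c < n → n < t → q.getD n root ∉ p := fun n h1 h2 =>
    Nat.findGreatest_is_greatest h1 (by omega)
  obtain ⟨j, hj, hjc⟩ := (List.mem_iff_exists_getD (d := root)).mp hcp
  rcases lt_or_ge j c with hjc' | hcj
  · have h0 := hq.getD_sub_eq_of_getD_eq hG hp (by omega) hj hjc.symm (r := j) (by omega) le_rfl
    rw [Nat.sub_self] at h0
    have hstep := hq.dirAdj_getD (i := c - j - 1) (by omega)
    rw [show c - j - 1 + 1 = c - j by omega, h0] at hstep
    refine ⟨q.getD (c - j - 1) root, List.getD_mem root (by omega), ?_⟩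
    exact hplen ▸ parent_mem_adjFacetVertices hp (List.ne_nil_of_length_pos (by omega)) hstep
  have hjt : j ≠ t - 1 := by
    rintro rfl
    rw [List.getD_eq_getElem?_getD, ← hplen, ← List.getLast?_eq_getElem?, hx,
      Option.getD_some] at hjc
    exact hxq (hjc ▸ List.getD_mem root (by omega))
  rcases (show j = t - 2 ∨ j + 3 ≤ t by omega) with rfl | hjt3
  · have hstep := hq.dirAdj_getD (i := c) (by omega)
    rw [← hjc] at hstep
    refine ⟨q.getD (c + 1) root, List.getD_mem root (by omega), ?_⟩
    subst hplen
    exact child_mem_adjFacetVertices hp (by omega) hstep (hqmax (c + 1) (by omega) (by omega))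
  · exact false_of_branch_of_properlyConnected hG hPC hp hq hplen hqlen hcj hjt3 hjc.symm hqmax
      |>.elim

end Branching

open MvPolynomial in
theorem MvPolynomial.inf_span_singleton_monomial_le {σ R : Type*} [CommSemiring R]
    {e : σ →₀ ℕ} {A B : Set (σ →₀ ℕ)} (h : ∀ a ∈ A, ∀ d, a ≤ e + d → ∃ b ∈ B, b ≤ d) :
    Ideal.span ((fun a => monomial a (1 : R)) '' A) ⊓ Ideal.span {monomial e 1} ≤
      Ideal.span {monomial e 1} * Ideal.span ((fun b => monomial b (1 : R)) '' B) := by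
  intro f hf
  obtain ⟨hfA, hfe⟩ := Submodule.mem_inf.mp hf
  obtain ⟨g, rfl⟩ := Ideal.mem_span_singleton'.mp hfe
  have hg : g ∈ Ideal.span ((fun b => monomial b (1 : R)) '' B) := by
    refine mem_ideal_span_monomial_image.mpr fun d hd => ?_
    have hed : e + d ∈ (g * monomial e 1).support := by
      rw [mem_support_iff, mul_comm, coeff_monomial_mul, one_mul]
      exact mem_support_iff.mp hd
    obtain ⟨a, ha, hae⟩ := mem_ideal_span_monomial_image.mp hfA (e + d) hed
    exact h a ha d hae
  exact mul_comm g _ ▸ Ideal.mul_mem_mul (Ideal.mem_span_singleton_self _) hg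

section PathIdeal

open MvPolynomial

variable {V : Type} {G : SimpleGraph V} {root : V} {K : Type} [Field K]

theorem pathIdealOn_mono {S S' : Set V} (h : S ⊆ S') (t : ℕ) :
    pathIdealOn G root K S t ≤ pathIdealOn G root K S' t :=
  Ideal.span_mono fun _ ⟨q, hq, hlen, hS, hm⟩ => ⟨q, hq, hlen, fun v hv => h (hS v hv), hm⟩

variable [DecidableEq V]

noncomputable def sqfreeExponent (S : Finset V) : V →₀ ℕ := ∑ v ∈ S, Finsupp.single v 1

theorem sqfreeExponent_apply (S : Finset V) (v : V) :
    sqfreeExponent S v = if v ∈ S then 1 else 0 := by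
  simp [sqfreeExponent, Finsupp.finsetSum_apply, Finsupp.single_apply]

theorem prod_map_X_eq_monomial {q : List V} (hq : q.Nodup) :
    (q.map X).prod = monomial (sqfreeExponent q.toFinset) (1 : K) := by
  rw [← List.prod_toFinset _ hq, sqfreeExponent, monomial_sum_one]
  rfl

theorem pathIdealOn_eq_span_monomial (S : Set V) (t : ℕ) :
    pathIdealOn G root K S t = Ideal.span ((fun d => monomial d (1 : K)) ''
      {d | ∃ q : List V, IsDirPath G root q ∧ q.length = t ∧ (∀ v ∈ q, v ∈ S) ∧
        d = sqfreeExponent q.toFinset}) := by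
  rw [pathIdealOn, Set.image]
  congr 1
  ext m
  constructor
  · rintro ⟨q, hq, hlen, hS, rfl⟩
    exact ⟨_, ⟨q, hq, hlen, hS, rfl⟩, (prod_map_X_eq_monomial hq.nodup_s6).symm⟩
  · rintro ⟨_, ⟨q, hq, hlen, hS, rfl⟩, rfl⟩
    exact ⟨q, hq, hlen, hS, (prod_map_X_eq_monomial hq.nodup_s6).symm⟩

variable {t : ℕ} {p : List V} {x : V}

theorem mul_X_mem_pathIdealOn (hG : G.IsTree) (hp : IsDirPath G root p) (hplen : p.length = t)
    (hx : p.getLast? = some x) (hleaf : graphLeaf G x) {y : V}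
    (hy : y ∈ adjFacetVertices G root t p.toFinset) :
    (p.map X).prod * X y ∈ pathIdealOn G root K {x}ᶜ t := by
  obtain ⟨_, ⟨q, hq, hqlen, rfl⟩, hcard, hyq⟩ := hy
  obtain ⟨hyq, hyp⟩ := Finset.mem_sdiff.mp hyq
  have ht : t ≠ 0 := by
    rintro rfl
    simp [List.length_eq_zero_iff.mp hplen] at hx
  have hsdiff : q.toFinset \ p.toFinset = {y} := by
    refine (Finset.eq_of_subset_of_card_le (Finset.singleton_subset_iff.mpr
      (Finset.mem_sdiff.mpr ⟨hyq, hyp⟩)) ?_).symm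
    rw [Finset.card_sdiff, Finset.inter_comm, hcard, List.toFinset_card_of_nodup hq.nodup_s6, hqlen,
      Finset.card_singleton]
    omega
  have hxq : x ∉ q := fun h => by
    rw [IsDirPath.eq_of_mem_of_graphLeaf hG hp hq (hqlen.trans hplen.symm) hx hleaf h,
      Finset.inter_self, List.toFinset_card_of_nodup hp.nodup_s6, hplen] at hcard
    omega
  have hdvd : (q.map X).prod ∣ (p.map X).prod * (X y : MvPolynomial V K) := by
    rw [← List.prod_toFinset _ hq.nodup_s6, ← List.prod_toFinset _ hp.nodup_s6, mul_comm,
      ← Finset.prod_insert (mt List.mem_toFinset.mp (by simpa using hyp))]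
    refine Finset.prod_dvd_prod_of_subset _ _ _ fun v hv => ?_
    by_cases hvp : v ∈ p.toFinset
    · exact Finset.mem_insert_of_mem hvp
    · rw [Finset.mem_insert, ← Finset.mem_singleton, ← hsdiff]
      exact Or.inl (Finset.mem_sdiff.mpr ⟨hv, hvp⟩)
  refine Ideal.mem_of_dvd _ hdvd (Ideal.subset_span ⟨q, hq, hqlen, fun v hv h => ?_, rfl⟩)
  exact hxq (Set.mem_singleton_iff.mp h ▸ hv)

theorem pathIdealOn_inf_span_le (hG : G.IsTree)
    (hPC : ProperlyConnected (pathFacets G root t) (t - 1)) (hp : IsDirPath G root p)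
    (hplen : p.length = t) (hx : p.getLast? = some x) :
    pathIdealOn G root K {x}ᶜ t ⊓ Ideal.span {(p.map X).prod} ≤
      Ideal.span {(p.map X).prod} * (Ideal.span (X '' adjFacetVertices G root t p.toFinset) ⊔
        pathIdealOn G root K (adjFacetVertices G root t p.toFinset ∪ ↑p.toFinset)ᶜ t) := by
  set Y := adjFacetVertices G root t p.toFinset
  have hJ : Ideal.span (X '' Y) ⊔ pathIdealOn G root K (Y ∪ ↑p.toFinset)ᶜ t =
      Ideal.span ((fun d => monomial d (1 : K)) '' ((fun y => Finsupp.single y 1) '' Y ∪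
        {d | ∃ q : List V, IsDirPath G root q ∧ q.length = t ∧
          (∀ v ∈ q, v ∈ (Y ∪ ↑p.toFinset)ᶜ) ∧ d = sqfreeExponent q.toFinset})) := by
    rw [Set.image_union, Ideal.span_union, pathIdealOn_eq_span_monomial, Set.image_image]
    rfl
  rw [hJ, prod_map_X_eq_monomial hp.nodup_s6, pathIdealOn_eq_span_monomial]
  refine inf_span_singleton_monomial_le ?_
  rintro _ ⟨q, hq, hqlen, hqx, rfl⟩ d hle
  have hd : ∀ v ∈ q, v ∉ p → 1 ≤ d v := fun v hv hvp => by
    simpa [sqfreeExponent_apply, hv, hvp] using Finsupp.le_def.mp hle v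
  by_cases hY : ∃ y ∈ q, y ∈ Y
  · obtain ⟨y, hyq, hyY⟩ := hY
    have hyp : y ∉ p := mt List.mem_toFinset.mpr (notMem_of_mem_adjFacetVertices hyY)
    exact ⟨_, Or.inl ⟨y, hyY, rfl⟩, Finsupp.single_le_iff.mpr (hd y hyq hyp)⟩
  have hqp : ∀ v ∈ q, v ∉ p := fun v hv hvp => hY <|
    exists_mem_adjFacetVertices hG hPC hp hplen hx hq hqlen (fun h => hqx x h rfl) ⟨v, hv, hvp⟩
  refine ⟨sqfreeExponent q.toFinset, Or.inr ⟨q, hq, hqlen, fun v hv => ?_, rfl⟩,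
    Finsupp.le_def.mpr fun v => ?_⟩
  · simp only [Set.mem_compl_iff, Set.mem_union, Finset.mem_coe, List.mem_toFinset, not_or]
    exact ⟨fun h => hY ⟨v, hv, h⟩, hqp v hv⟩
  · rw [sqfreeExponent_apply]
    split_ifs with hv
    · exact hd v (List.mem_toFinset.mp hv) (hqp v (List.mem_toFinset.mp hv))
    · exact Nat.zero_le _

end PathIdeal

theorem pathIdeal_intersection_formula_general
    (V : Type) [DecidableEq V] (G : SimpleGraph V) (hG : G.IsTree) (root : V)
    (K : Type) [Field K] (t : ℕ)
    (hPC : ProperlyConnected (pathFacets G root t) (t - 1))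
    (p : List V) (hp : IsDirPath G root p) (hlen : p.length = t)
    (xit : V) (hxit : p.getLast? = some xit) (hleaf : graphLeaf G xit)
    (w : MvPolynomial V K) (hw : w = (p.map X).prod)
    (Y : Set V)
    (hY : Y = {y | ∃ G' ∈ pathFacets G root t,
      (G' ∩ p.toFinset).card = t - 1 ∧ y ∈ G' \ p.toFinset})
    (Z : Set V) (hZ : Z = Y ∪ ↑p.toFinset) :
    pathIdealOn G root K ({xit}ᶜ : Set V) t ⊓ Ideal.span {w} =
      Ideal.span {w} * Ideal.span (X '' Y) +
        Ideal.span {w} * pathIdealOn G root K Zᶜ t := by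
  subst hw hY hZ
  refine le_antisymm ?_ (sup_le (le_inf ?_ Ideal.mul_le_left) (le_inf ?_ Ideal.mul_le_left))
  · rw [Submodule.add_eq_sup, ← Ideal.mul_sup]
    exact pathIdealOn_inf_span_le hG hPC hp hlen hxit
  · rw [Ideal.span_mul_span', Ideal.span_le]
    rintro _ ⟨_, rfl, _, ⟨y, hy, rfl⟩, rfl⟩
    exact mul_X_mem_pathIdealOn hG hp hlen hxit hleaf hy
  · refine Ideal.mul_le_right.trans (pathIdealOn_mono (Set.compl_subset_compl.mpr ?_) t)
    exact Set.singleton_subset_iff.mpr (Or.inr (List.mem_toFinset.mpr (List.mem_of_getLast? hxit)))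

/-- Suppose `Δ_t(Γ)` is properly-connected, `w = x_{i_1} ⋯ x_{i_t}` is a
generator of `I_t(Γ)` with `x_{i_t}` a leaf of `Γ`, `F = {x_{i_1}, …, x_{i_t}}`,
`Y = ⋃ {G \ F : G a facet of Δ_t(Γ), |G ∩ F| = t - 1}` and `Z = Y ∪ F`. Then, with
`Γ' = Γ \ {x_{i_t}}` and `Γ'' = Γ \ Z`, we have
`I_t(Γ') ∩ (w) = w(y_1, …, y_a) + w I_t(Γ'')`. -/
theorem pathIdeal_intersection_formula
    (V : Type) [Fintype V] [DecidableEq V] (G : SimpleGraph V) (hG : G.IsTree) (root : V)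
    (K : Type) [Field K] (t : ℕ) (ht : 2 ≤ t)
    (hPC : ProperlyConnected (pathFacets G root t) (t - 1))
    (p : List V) (hp : IsDirPath G root p) (hlen : p.length = t)
    (xit : V) (hxit : p.getLast? = some xit) (hleaf : graphLeaf G xit)
    (w : MvPolynomial V K) (hw : w = (p.map X).prod)
    (Y : Set V)
    (hY : Y = {y | ∃ G' ∈ pathFacets G root t,
      (G' ∩ p.toFinset).card = t - 1 ∧ y ∈ G' \ p.toFinset})
    (Z : Set V) (hZ : Z = Y ∪ ↑p.toFinset) :
    pathIdealOn G root K ({xit}ᶜ : Set V) t ⊓ Ideal.span {w} =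
      Ideal.span {w} * Ideal.span (X '' Y) +
        Ideal.span {w} * pathIdealOn G root K Zᶜ t :=
  pathIdeal_intersection_formula_general V G hG root K t hPC p hp hlen xit hxit hleaf w hw Y hY Z hZ
end

section
/- Let n = 4k with k ≥ 1, let R = k[x_1,…,x_n] over a field, and let q_0 = x_2x_3x_4, q_i = x_{2i−1}x_{2i}x_{2i+1} + x_{2i+2}x_{2i+3}x_{2i+4} for i = 1,…,2k−2, and q_{2k−1} = x_{4k−3}x_{4k−2}x_{4k−1}. Then √(q_0, q_1, …, q_{2k−1}) = √(I_3(L_n)); in particular ara(I_3(L_{4k})) ≤ 2k. -/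
open MvPolynomial CategoryTheory

/-- The projective dimension (in `ℕ∞`) of an `R`-module `M`: the least `n` such that `M`
admits a projective resolution vanishing in homological degrees `> n`. -/
noncomputable def projDimN (R : Type) [CommRing R] (M : Type) [AddCommGroup M] [Module R M] : ℕ∞ :=
  sInf {n : ℕ∞ | ∃ P : ProjectiveResolution (ModuleCat.of R M),
    ∀ i : ℕ, n < (i : ℕ∞) → Limits.IsZero (P.complex.X i)}

/-- The arithmetical rank of an ideal `I`: the least number of elements generating `I`
up to radical. -/
noncomputable def araI {R : Type} [CommRing R] (I : Ideal R) : ℕ :=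
  sInf {s : ℕ | ∃ f : Fin s → R, Ideal.radical (Ideal.span (Set.range f)) = Ideal.radical I}

open Classical in
/-- The projective dimension of an ideal, with the convention `pd (0) = -1`. -/
noncomputable def pdIdealZ {R : Type} [CommRing R] (I : Ideal R) : WithTop ℤ :=
  if I = ⊥ then -1 else (projDimN R I).map (fun n : ℕ => (n : ℤ))

section Line

variable (K : Type) [Field K]

/-- The monomial `x_{i+1} x_{i+2} ⋯ x_{i+t}` (on `0`-indexed variables, the product
`X i ⋯ X (i+t-1)`), corresponding to a directed path of length `t` in the line graph
`L_n`. -/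
noncomputable def lineMon (n t i : ℕ) (h : i + t ≤ n) : MvPolynomial (Fin n) K :=
  ∏ j : Fin t, X (⟨i + j, by omega⟩ : Fin n)

/-- The set of minimal monomial generators of the path ideal `I_t(L_n)`. -/
def lineGens (n t : ℕ) : Set (MvPolynomial (Fin n) K) :=
  {m | ∃ (i : ℕ) (h : i + t ≤ n), m = lineMon K n t i h}

/-- The path ideal `I_t(L_n)` of the line graph `L_n`. -/
noncomputable def linePathIdeal (n t : ℕ) : Ideal (MvPolynomial (Fin n) K) :=
  Ideal.span (lineGens K n t)

/-- A good partition `P_0, …, P_r` of the generators of `I_t(L_n)`: a partition of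
`G(I_t(L_n))` with `r + 1 = pd(R/I_t(L_n))`, such that `P_0` is a singleton and any two
distinct elements `p, p'` of a part `P_i` with `0 < i ≤ r` admit an element of an earlier
part `P_{i'}`, `i' < i`, dividing `p * p'`. -/
def IsGoodPartition (n t : ℕ) (r : ℕ) (P : ℕ → Set (MvPolynomial (Fin n) K)) : Prop :=
  ((r : ℕ∞) + 1 =
      projDimN (MvPolynomial (Fin n) K) (MvPolynomial (Fin n) K ⧸ linePathIdeal K n t)) ∧
  (∀ i ≤ r, ∀ j ≤ r, i ≠ j → Disjoint (P i) (P j)) ∧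
  (⋃ i ≤ r, P i) = lineGens K n t ∧
  (∃ p, P 0 = {p}) ∧
  (∀ i, 0 < i → i ≤ r → ∀ p ∈ P i, ∀ p' ∈ P i, p ≠ p' →
    ∃ i' < i, ∃ q ∈ P i', q ∣ p * p')

end Line

/-! Index the variables from `0` and write `m_a = x_a x_{a+1} x_{a+2}`. The identity
`m_a m_{a+3} = x_a x_{a+4} x_{a+5} m_{a+1}` shows that once `m_{a+1}` lies in the radical
`J = √(q_0, …, q_{2k-1})`, so does the product of the two summands of `q = m_a + m_{a+3}`;
as `m_a² = m_a q - m_a m_{a+3}`, both summands then lie in `J`. Starting from `q_0 = m_1`, this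
zigzags along the line and puts every odd-indexed `m_a` and every even-indexed one except the
last, `m_{4k-4} = q_{2k-1}`, into `J`. -/

theorem Ideal.IsRadical.mem_of_add_mem_of_mul_mem {R : Type*} [CommRing R] {J : Ideal R}
    (hJ : J.IsRadical) {p q : R} (hadd : p + q ∈ J) (hmul : p * q ∈ J) : p ∈ J :=
  hJ ⟨2, by simpa [sq, mul_add] using J.sub_mem (J.mul_mem_left p hadd) hmul⟩

theorem Set.ncard_le_of_subset_range {α : Type*} {s : ℕ} {S : Set α} {g : Fin s → α}
    (h : S ⊆ Set.range g) : S.ncard ≤ s :=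
  calc S.ncard ≤ (Set.range g).ncard := Set.ncard_le_ncard h (Set.finite_range g)
    _ ≤ s := by
      rw [← Set.image_univ]
      exact (Set.ncard_image_le Set.finite_univ).trans (by simp)

theorem araI_le_ncard {R : Type} [CommRing R] {I : Ideal R} {S : Set R} (hS : S.Finite)
    (h : (Ideal.span S).radical = I.radical) : araI I ≤ S.ncard := by
  have := hS.to_subtype
  let e : S ≃ Fin S.ncard := Finite.equivFin S
  refine Nat.sInf_le ⟨Subtype.val ∘ e.symm, ?_⟩
  rwa [e.symm.surjective.range_comp, Subtype.range_coe]

section TripleProd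

variable {R : Type*} [CommRing R] (x : ℕ → R)

def tripleProd (a : ℕ) : R := x a * x (a + 1) * x (a + 2)

def tripleGens (n : ℕ) : Set R := {q | ∃ a, a + 3 ≤ n ∧ q = tripleProd x a}

/-- The paper's `{q_0, …, q_{2k-1}}`. -/
def zigzagSet (k : ℕ) : Set R :=
  {q | q = tripleProd x 1 ∨
    (∃ i, 1 ≤ i ∧ i ≤ 2 * k - 2 ∧
      q = tripleProd x (2 * i - 2) + tripleProd x (2 * i + 1)) ∨
    q = tripleProd x (4 * k - 4)}

theorem tripleProd_dvd_mul (a : ℕ) :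
    tripleProd x (a + 1) ∣ tripleProd x a * tripleProd x (a + 3) :=
  ⟨x a * x (a + 4) * x (a + 5), by simp only [tripleProd]; ring⟩

theorem Ideal.IsRadical.tripleProd_mem_of_zigzag {J : Ideal R} (hJ : J.IsRadical) {N : ℕ}
    (h1 : tripleProd x 1 ∈ J)
    (hsum : ∀ j < N, tripleProd x (2 * j) + tripleProd x (2 * j + 3) ∈ J) :
    (∀ j ≤ N, tripleProd x (2 * j + 1) ∈ J) ∧ ∀ j < N, tripleProd x (2 * j) ∈ J := by
  have hmul : ∀ j, tripleProd x (2 * j + 1) ∈ J →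
      tripleProd x (2 * j) * tripleProd x (2 * j + 3) ∈ J :=
    fun j hj => J.mem_of_dvd (tripleProd_dvd_mul x (2 * j)) hj
  have hodd : ∀ j ≤ N, tripleProd x (2 * j + 1) ∈ J := by
    intro j hj
    induction j with
    | zero => exact h1
    | succ j ih =>
      exact hJ.mem_of_add_mem_of_mul_mem (add_comm (tripleProd x (2 * j)) _ ▸ hsum j hj)
        (mul_comm (tripleProd x (2 * j)) _ ▸ hmul j (ih (by omega)))
  exact ⟨hodd, fun j hj => hJ.mem_of_add_mem_of_mul_mem (hsum j hj) (hmul j (hodd j hj.le))⟩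

theorem zigzagSet_subset_range {k : ℕ} (hk : 1 ≤ k) :
    ∃ g : Fin (2 * k) → R, zigzagSet x k ⊆ Set.range g := by
  refine ⟨fun j => if j.val = 0 then tripleProd x 1
    else if j.val = 2 * k - 1 then tripleProd x (4 * k - 4)
    else tripleProd x (2 * j - 2) + tripleProd x (2 * j + 1), ?_⟩
  rintro q (rfl | ⟨i, hi, hi', rfl⟩ | rfl)
  · exact ⟨⟨0, by omega⟩, by simp⟩
  · exact ⟨⟨i, by omega⟩, by simp [show i ≠ 0 by omega, show i ≠ 2 * k - 1 by omega]⟩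
  · exact ⟨⟨2 * k - 1, by omega⟩, by simp [show 2 * k - 1 ≠ 0 by omega]⟩

variable {x}

theorem zigzagSet_subset_span_tripleGens {k : ℕ} (hk : 1 ≤ k) :
    zigzagSet x k ⊆ Ideal.span (tripleGens x (4 * k)) := by
  have hgen : ∀ a, a + 3 ≤ 4 * k → tripleProd x a ∈ Ideal.span (tripleGens x (4 * k)) :=
    fun a ha => Ideal.subset_span ⟨a, ha, rfl⟩
  rintro q (rfl | ⟨i, hi, hi', rfl⟩ | rfl)
  · exact hgen 1 (by omega)
  · exact add_mem (hgen _ (by omega)) (hgen _ (by omega))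
  · exact hgen _ (by omega)

theorem tripleGens_subset_radical_span_zigzagSet (k : ℕ) :
    tripleGens x (4 * k) ⊆ (Ideal.span (zigzagSet x k)).radical := by
  have hmem : ∀ {q}, q ∈ zigzagSet x k → q ∈ (Ideal.span (zigzagSet x k)).radical :=
    fun hq => Ideal.le_radical (Ideal.subset_span hq)
  have hzigzag := (Ideal.radical_isRadical _).tripleProd_mem_of_zigzag x (N := 2 * k - 2)
    (hmem (Or.inl rfl))
    (fun j hj => hmem (Or.inr (Or.inl ⟨j + 1, by omega, by omega, by
      rw [show 2 * (j + 1) - 2 = 2 * j by omega, show 2 * (j + 1) + 1 = 2 * j + 3 by omega]⟩)))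
  rintro q ⟨a, ha, rfl⟩
  obtain ⟨b, rfl | rfl⟩ := Nat.even_or_odd' a
  · rcases (show b ≤ 2 * k - 2 by omega).lt_or_eq with hb | rfl
    · exact hzigzag.2 b hb
    · exact hmem (Or.inr (Or.inr (by congr 1; omega)))
  · exact hzigzag.1 b (by omega)

theorem radical_span_zigzagSet {k : ℕ} (hk : 1 ≤ k) :
    (Ideal.span (zigzagSet x k)).radical = (Ideal.span (tripleGens x (4 * k))).radical :=
  le_antisymm (Ideal.radical_mono (Ideal.span_le.2 (zigzagSet_subset_span_tripleGens hk)))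
    (Ideal.radical_le_radical_iff.2
      (Ideal.span_le.2 (tripleGens_subset_radical_span_zigzagSet k)))

end TripleProd

/-- The variable `X b` of `K[X_0, …, X_{n-1}]`, extended by `0` for `b ≥ n` so that products of
consecutive variables can be indexed by `ℕ`. -/
noncomputable def natVar (K : Type) [Field K] (n b : ℕ) : MvPolynomial (Fin n) K :=
  if hb : b < n then X ⟨b, hb⟩ else 0

theorem lineMon_three_eq_tripleProd (K : Type) [Field K] (n a : ℕ) (h : a + 3 ≤ n) :
    lineMon K n 3 a h = tripleProd (natVar K n) a := by
  simp [lineMon, Fin.prod_univ_three, tripleProd, natVar, show a < n by omega,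
    show a + 1 < n by omega, show a + 2 < n by omega]

theorem lineGens_three_eq_tripleGens (K : Type) [Field K] (n : ℕ) :
    lineGens K n 3 = tripleGens (natVar K n) n := by
  ext q
  simp [lineGens, tripleGens, lineMon_three_eq_tripleProd]

/-- Let `n = 4k` with `k ≥ 1` and let `q_0 = x₂x₃x₄`,
`q_i = x_{2i-1}x_{2i}x_{2i+1} + x_{2i+2}x_{2i+3}x_{2i+4}` for `i = 1, …, 2k-2`, and
`q_{2k-1} = x_{4k-3}x_{4k-2}x_{4k-1}`. Then `√(q_0, …, q_{2k-1}) = √(I_3(L_n))`; in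
particular `ara(I_3(L_{4k})) ≤ 2k`. (Here `x_j` is the `0`-indexed variable `X (j-1)`, and
`x_j x_{j+1} x_{j+2} = lineMon K (4k) 3 (j-1) _`.) -/
theorem sqrt_span_eq_sqrt_line_pathIdeal_three
    (k : ℕ) (hk : 1 ≤ k) (K : Type) [Field K]
    (Q : Set (MvPolynomial (Fin (4 * k)) K))
    (hQ : Q = {q | q = lineMon K (4 * k) 3 1 (by omega) ∨
      (∃ i, ∃ _ : 1 ≤ i, ∃ _ : i ≤ 2 * k - 2,
        q = lineMon K (4 * k) 3 (2 * i - 2) (by omega) +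
          lineMon K (4 * k) 3 (2 * i + 1) (by omega)) ∨
      q = lineMon K (4 * k) 3 (4 * k - 4) (by omega)}) :
    Ideal.radical (Ideal.span Q) = Ideal.radical (linePathIdeal K (4 * k) 3) ∧
      araI (linePathIdeal K (4 * k) 3) ≤ 2 * k := by
  have hQ' : Q = zigzagSet (natVar K (4 * k)) k := by
    simpa only [zigzagSet, lineMon_three_eq_tripleProd, exists_prop] using hQ
  have hrad : (Ideal.span Q).radical = (linePathIdeal K (4 * k) 3).radical := by
    rw [hQ', linePathIdeal, lineGens_three_eq_tripleGens]
    exact radical_span_zigzagSet hk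
  obtain ⟨g, hg⟩ := zigzagSet_subset_range (natVar K (4 * k)) hk
  rw [← hQ'] at hg
  exact ⟨hrad, (araI_le_ncard ((Set.finite_range g).subset hg) hrad).trans
    (Set.ncard_le_of_subset_range hg)⟩
end

section
/- Fix n ≥ t ≥ 2, a field k, and let m_i = x_i x_{i+1} ⋯ x_{i+t−1} so that I_t(L_n) = (m_1,…,m_{n−t+1}). If P_0,…,P_r is a good partition of I_t(L_n) and m_i, m_j ∈ P_ℓ with i < j, then i + 1 < j ≤ i + t. -/
open MvPolynomial CategoryTheory

/-!
Two distinct generators `m_i, m_j` of a part `P_ℓ` force `ℓ > 0`, as `P_0` is a singleton, so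
some generator `m_k` of an earlier part, hence with `k ∉ {i, j}`, divides `m_i m_j`. Comparing
exponents, the interval `[k, k + t)` lies in `[i, i + t) ∪ [j, j + t)`. If `j = i + 1` this union
is the interval `[i, i + t]`, and if `j > i + t` it consists of two separated intervals of length
`t`; either way only `k = i` and `k = j` are possible.
-/

noncomputable def lineExponent (n t i : ℕ) (h : i + t ≤ n) : Fin n →₀ ℕ :=
  ∑ j : Fin t, Finsupp.single (⟨i + j, by omega⟩ : Fin n) 1

lemma lineExponent_apply (n t i : ℕ) (h : i + t ≤ n) (v : Fin n) :
    lineExponent n t i h v = if i ≤ v ∧ (v : ℕ) < i + t then 1 else 0 := by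
  classical
  simp only [lineExponent, Finsupp.finsetSum_apply, Finsupp.single_apply, Finset.sum_boole,
    Nat.cast_id]
  split_ifs with hv
  · rw [Finset.card_eq_one]
    refine ⟨⟨v - i, by omega⟩, ?_⟩
    ext j
    simp only [Finset.mem_filter, Finset.mem_univ, true_and, Finset.mem_singleton, Fin.ext_iff]
    omega
  · rw [Finset.card_eq_zero, Finset.filter_eq_empty_iff]
    intro j _ hj
    have := congrArg Fin.val hj
    simp only at this
    omega

section Line

variable (K : Type) [Field K] {n t : ℕ}

lemma lineMon_eq_monomial (i : ℕ) (h : i + t ≤ n) :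
    lineMon K n t i h = monomial (lineExponent n t i h) 1 := by
  rw [lineExponent, monomial_sum_one]
  simp [lineMon, X]

variable {K}

lemma eq_of_lineMon_eq (ht : 0 < t) {i j : ℕ} (hi : i + t ≤ n) (hj : j + t ≤ n)
    (hij : lineMon K n t i hi = lineMon K n t j hj) : i = j := by
  rw [lineMon_eq_monomial, lineMon_eq_monomial] at hij
  have hexp := monomial_left_injective one_ne_zero hij
  have hi' := DFunLike.congr_fun hexp ⟨i, by omega⟩
  have hj' := DFunLike.congr_fun hexp ⟨j, by omega⟩
  simp only [lineExponent_apply] at hi' hj'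
  split_ifs at hi' hj' <;> omega

lemma Ico_subset_of_lineMon_dvd_mul {i j k : ℕ} (hi : i + t ≤ n) (hj : j + t ≤ n)
    (hk : k + t ≤ n) (hdvd : lineMon K n t k hk ∣ lineMon K n t i hi * lineMon K n t j hj) :
    Set.Ico k (k + t) ⊆ Set.Ico i (i + t) ∪ Set.Ico j (j + t) := by
  rw [lineMon_eq_monomial, lineMon_eq_monomial, lineMon_eq_monomial, monomial_mul,
    monomial_dvd_monomial] at hdvd
  obtain ⟨hle | hle, -⟩ := hdvd
  · simp at hle
  intro v ⟨hkv, hvk⟩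
  have hv := hle ⟨v, by omega⟩
  simp only [Finsupp.add_apply, lineExponent_apply] at hv
  simp only [Set.mem_union, Set.mem_Ico]
  split_ifs at hv <;> omega

theorem IsGoodPartition.exists_dvd_mul_of_ne {r : ℕ} {P : ℕ → Set (MvPolynomial (Fin n) K)}
    (hP : IsGoodPartition K n t r P) {ℓ : ℕ} (hℓ : ℓ ≤ r) {p p' : MvPolynomial (Fin n) K}
    (hp : p ∈ P ℓ) (hp' : p' ∈ P ℓ) (hne : p ≠ p') :
    ∃ q ∈ lineGens K n t, q ∉ P ℓ ∧ q ∣ p * p' := by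
  obtain ⟨-, hdisj, hunion, ⟨p₀, hP₀⟩, hgood⟩ := hP
  have hℓ₀ : 0 < ℓ := by
    refine Nat.pos_of_ne_zero ?_
    rintro rfl
    rw [hP₀] at hp hp'
    exact hne (hp.trans hp'.symm)
  obtain ⟨i', hi', q, hq, hdvd⟩ := hgood ℓ hℓ₀ hℓ p hp p' hp' hne
  have hi'r : i' ≤ r := hi'.le.trans hℓ
  exact ⟨q, hunion ▸ Set.mem_biUnion hi'r hq,
    Set.disjoint_left.mp (hdisj i' hi'r ℓ hℓ hi'.ne) hq, hdvd⟩

end Line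

lemma eq_or_eq_of_Ico_subset_union {t i j k : ℕ} (ht : 0 < t)
    (hgap : j = i + 1 ∨ i + t < j)
    (hsub : Set.Ico k (k + t) ⊆ Set.Ico i (i + t) ∪ Set.Ico j (j + t)) : k = i ∨ k = j := by
  have hk := hsub ⟨le_refl k, by omega⟩
  have hlast := hsub (show k + t - 1 ∈ Set.Ico k (k + t) from ⟨by omega, by omega⟩)
  simp only [Set.mem_union, Set.mem_Ico] at hk hlast
  rcases hgap with rfl | hgap
  · omega
  · by_contra hne
    have hmid := hsub (show i + t ∈ Set.Ico k (k + t) from ⟨by omega, by omega⟩)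
    simp only [Set.mem_union, Set.mem_Ico] at hmid
    omega

theorem goodPartition_spacing_general
    (n t : ℕ) (ht : 2 ≤ t) (K : Type) [Field K]
    (r : ℕ) (P : ℕ → Set (MvPolynomial (Fin n) K)) (hP : IsGoodPartition K n t r P)
    (ℓ : ℕ) (hℓ : ℓ ≤ r) (i j : ℕ) (hi : i + t ≤ n) (hj : j + t ≤ n) (hij : i < j)
    (hmi : lineMon K n t i hi ∈ P ℓ) (hmj : lineMon K n t j hj ∈ P ℓ) :
    i + 1 < j ∧ j ≤ i + t := by
  have hne : lineMon K n t i hi ≠ lineMon K n t j hj := fun h =>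
    hij.ne (eq_of_lineMon_eq (by omega) hi hj h)
  obtain ⟨_, ⟨k, hk, rfl⟩, hkℓ, hdvd⟩ := hP.exists_dvd_mul_of_ne hℓ hmi hmj hne
  by_contra hspacing
  rcases eq_or_eq_of_Ico_subset_union (by omega) (by omega)
      (Ico_subset_of_lineMon_dvd_mul hi hj hk hdvd) with rfl | rfl
  · exact hkℓ hmi
  · exact hkℓ hmj

/-- If `P_0, …, P_r` is a good partition of `I_t(L_n)` (with `n ≥ t ≥ 2`)
and the generators `m_i`, `m_j` (here `0`-indexed: `m_i = x_{i+1} ⋯ x_{i+t}`) both lie in a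
part `P_ℓ` with `i < j`, then `i + 1 < j ≤ i + t`. -/
theorem goodPartition_spacing
    (n t : ℕ) (ht : 2 ≤ t) (htn : t ≤ n) (K : Type) [Field K]
    (r : ℕ) (P : ℕ → Set (MvPolynomial (Fin n) K)) (hP : IsGoodPartition K n t r P)
    (ℓ : ℕ) (hℓ : ℓ ≤ r) (i j : ℕ) (hi : i + t ≤ n) (hj : j + t ≤ n) (hij : i < j)
    (hmi : lineMon K n t i hi ∈ P ℓ) (hmj : lineMon K n t j hj ∈ P ℓ) :
    i + 1 < j ∧ j ≤ i + t :=
  goodPartition_spacing_general n t ht K r P hP ℓ hℓ i j hi hj hij hmi hmj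
end

section
/- Fix n ≥ t ≥ 2 and a field k. If P_0,…,P_r is a good partition of I_t(L_n), then |P_ℓ| ≤ ⌊t/2⌋ + 1 for all ℓ = 1,…,r. -/
/-!
Index the generators of `I_t(L_n)` by the first vertex `i` of their path `[i, i + t)`. If two
distinct generators of a part `P_ℓ`, `ℓ ≥ 1`, start at `a < b`, some generator of an earlier part
divides their product; since the variables are prime, its path `[j, j + t)`, `j ≠ a, b`, is covered
by the two paths, which forces `a + 2 ≤ b ≤ a + t`. Starting points pairwise at such distances
halve into distinct elements of `{0, …, ⌊t/2⌋}` after subtracting the least one.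
-/

open MvPolynomial CategoryTheory

namespace Nat

theorem add_two_le_and_le_add_of_Ico_subset_union {t a b j : ℕ} (ht : 0 < t) (hab : a < b)
    (hja : j ≠ a) (hjb : j ≠ b)
    (h : Set.Ico j (j + t) ⊆ Set.Ico a (a + t) ∪ Set.Ico b (b + t)) :
    a + 2 ≤ b ∧ b ≤ a + t := by
  have hfirst := h (Set.left_mem_Ico.mpr (by omega : j < j + t))
  have hlast := h (⟨by omega, by omega⟩ : j + t - 1 ∈ Set.Ico j (j + t))
  simp only [Set.mem_union, Set.mem_Ico] at hfirst hlast
  refine ⟨by omega, ?_⟩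
  by_contra! hfar
  -- `a + t` then lies on the path starting at `j`, but on neither of the two others
  have hgap := h (⟨by omega, by omega⟩ : a + t ∈ Set.Ico j (j + t))
  simp only [Set.mem_union, Set.mem_Ico] at hgap
  omega

theorem ncard_le_div_two_add_one_of_spacing {t : ℕ} (S : Set ℕ)
    (hS : ∀ a ∈ S, ∀ b ∈ S, a < b → a + 2 ≤ b ∧ b ≤ a + t) : S.ncard ≤ t / 2 + 1 := by
  have hmin : ∀ a ∈ S, sInf S ≤ a := fun a ha => Nat.sInf_le ha
  calc S.ncard ≤ (Set.Iic (t / 2)).ncard := by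
        refine Set.ncard_le_ncard_of_injOn (fun a => (a - sInf S) / 2) ?_ ?_ (Set.finite_Iic _)
        · intro a ha
          have hmem : sInf S ∈ S := Nat.sInf_mem ⟨a, ha⟩
          rcases (hmin a ha).eq_or_lt with h | h
          · simp [← h]
          · have := (hS _ hmem a ha h).2
            simp only [Set.mem_Iic]
            omega
        · intro a ha b hb hab
          have := hmin a ha
          have := hmin b hb
          simp only at hab
          rcases lt_trichotomy a b with h | h | h
          · have := hS a ha b hb h; omega
          · exact h
          · have := hS b hb a ha h; omega
    _ = t / 2 + 1 := by rw [← Finset.coe_Iic, Set.ncard_coe_finset, Nat.card_Iic]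

end Nat

section Line

variable {K : Type} [Field K] {n t : ℕ}

theorem X_dvd_lineMon_iff {i : ℕ} (h : i + t ≤ n) (v : Fin n) :
    X v ∣ lineMon K n t i h ↔ (v : ℕ) ∈ Set.Ico i (i + t) := by
  rw [lineMon, X_prime.dvd_finsetProd_iff]
  simp only [Finset.mem_univ, true_and, X_dvd_X, Fin.ext_iff, Set.mem_Ico]
  constructor
  · rintro ⟨j, hj⟩
    omega
  · rintro ⟨hiv, hvi⟩
    exact ⟨⟨v - i, by omega⟩, by simp only; omega⟩

theorem Ico_subset_union_of_lineMon_dvd_mul {j a b : ℕ} (hj : j + t ≤ n) (ha : a + t ≤ n)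
    (hb : b + t ≤ n) (hdvd : lineMon K n t j hj ∣ lineMon K n t a ha * lineMon K n t b hb) :
    Set.Ico j (j + t) ⊆ Set.Ico a (a + t) ∪ Set.Ico b (b + t) := by
  intro v hv
  have hvn : v < n := by grind
  have hX : X ⟨v, hvn⟩ ∣ lineMon K n t a ha * lineMon K n t b hb :=
    ((X_dvd_lineMon_iff hj ⟨v, hvn⟩).mpr hv).trans hdvd
  rw [X_dvd_mul_iff, X_dvd_lineMon_iff, X_dvd_lineMon_iff] at hX
  exact hX

theorem lineMon_injective (ht : 0 < t) {a b : ℕ} (ha : a + t ≤ n) (hb : b + t ≤ n)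
    (hab : lineMon K n t a ha = lineMon K n t b hb) : a = b := by
  have hsub := Ico_subset_union_of_lineMon_dvd_mul ha hb hb ((dvd_of_eq hab).mul_right _)
  have hsub' := Ico_subset_union_of_lineMon_dvd_mul hb ha ha ((dvd_of_eq hab.symm).mul_right _)
  have := hsub (Set.left_mem_Ico.mpr (by omega : a < a + t))
  have := hsub' (Set.left_mem_Ico.mpr (by omega : b < b + t))
  simp only [Set.union_self, Set.mem_Ico] at *
  omega

def lineIndices (n t : ℕ) (A : Set (MvPolynomial (Fin n) K)) : Set ℕ :=
  {i | ∃ h : i + t ≤ n, lineMon K n t i h ∈ A}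

theorem ncard_le_ncard_lineIndices {A : Set (MvPolynomial (Fin n) K)} (hA : A ⊆ lineGens K n t) :
    A.ncard ≤ (lineIndices n t A).ncard := by
  have hfin : (lineIndices n t A).Finite :=
    (Set.finite_Iic n).subset fun i ⟨h, _⟩ => by simp only [Set.mem_Iic]; omega
  let f : ℕ → MvPolynomial (Fin n) K := fun i => if h : i + t ≤ n then lineMon K n t i h else 0
  have hcover : A ⊆ f '' lineIndices n t A := by
    intro p hp
    obtain ⟨i, h, rfl⟩ := hA hp
    exact ⟨i, ⟨h, hp⟩, dif_pos h⟩
  calc A.ncard ≤ (f '' lineIndices n t A).ncard := Set.ncard_le_ncard hcover (hfin.image f)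
    _ ≤ (lineIndices n t A).ncard := Set.ncard_image_le hfin

namespace IsGoodPartition

variable {r : ℕ} {P : ℕ → Set (MvPolynomial (Fin n) K)}

theorem subset_lineGens (hP : IsGoodPartition K n t r P) {i : ℕ} (hi : i ≤ r) :
    P i ⊆ lineGens K n t :=
  hP.2.2.1 ▸ Set.subset_biUnion_of_mem (u := P) hi

theorem exists_lineMon_notMem_dvd_mul (hP : IsGoodPartition K n t r P) {ℓ : ℕ} (hℓ : 0 < ℓ)
    (hℓr : ℓ ≤ r) {p p' : MvPolynomial (Fin n) K} (hp : p ∈ P ℓ) (hp' : p' ∈ P ℓ)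
    (hne : p ≠ p') : ∃ (j : ℕ) (hj : j + t ≤ n), lineMon K n t j hj ∉ P ℓ ∧
      lineMon K n t j hj ∣ p * p' := by
  obtain ⟨i, hi, q, hq, hdvd⟩ := hP.2.2.2.2 ℓ hℓ hℓr p hp p' hp' hne
  obtain ⟨j, hj, rfl⟩ := hP.subset_lineGens (by omega : i ≤ r) hq
  exact ⟨j, hj, Set.disjoint_left.mp (hP.2.1 i (by omega) ℓ hℓr (by omega)) hq, hdvd⟩

theorem lineIndices_spacing (hP : IsGoodPartition K n t r P) (ht : 0 < t) {ℓ : ℕ} (hℓ : 0 < ℓ)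
    (hℓr : ℓ ≤ r) : ∀ a ∈ lineIndices n t (P ℓ), ∀ b ∈ lineIndices n t (P ℓ),
      a < b → a + 2 ≤ b ∧ b ≤ a + t := by
  rintro a ⟨ha, hpa⟩ b ⟨hb, hpb⟩ hab
  have hne : lineMon K n t a ha ≠ lineMon K n t b hb := fun h =>
    hab.ne (lineMon_injective ht ha hb h)
  obtain ⟨j, hj, hjP, hdvd⟩ := hP.exists_lineMon_notMem_dvd_mul hℓ hℓr hpa hpb hne
  refine Nat.add_two_le_and_le_add_of_Ico_subset_union ht hab ?_ ?_
    (Ico_subset_union_of_lineMon_dvd_mul hj ha hb hdvd)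
  · rintro rfl; exact hjP hpa
  · rintro rfl; exact hjP hpb

end IsGoodPartition

end Line

theorem goodPartition_part_card_le_general
    (n t : ℕ) (ht : 2 ≤ t) (K : Type) [Field K]
    (r : ℕ) (P : ℕ → Set (MvPolynomial (Fin n) K)) (hP : IsGoodPartition K n t r P)
    (ℓ : ℕ) (hℓ : 1 ≤ ℓ) (hℓr : ℓ ≤ r) :
    (P ℓ).ncard ≤ t / 2 + 1 :=
  (ncard_le_ncard_lineIndices (hP.subset_lineGens hℓr)).trans <|
    Nat.ncard_le_div_two_add_one_of_spacing _ (hP.lineIndices_spacing (by omega) hℓ hℓr)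

/-- If `P_0, …, P_r` is a good partition of `I_t(L_n)` (with `n ≥ t ≥ 2`),
then `|P_ℓ| ≤ ⌊t/2⌋ + 1` for all `ℓ = 1, …, r`. -/
theorem goodPartition_part_card_le
    (n t : ℕ) (ht : 2 ≤ t) (htn : t ≤ n) (K : Type) [Field K]
    (r : ℕ) (P : ℕ → Set (MvPolynomial (Fin n) K)) (hP : IsGoodPartition K n t r P)
    (ℓ : ℕ) (hℓ : 1 ≤ ℓ) (hℓr : ℓ ≤ r) :
    (P ℓ).ncard ≤ t / 2 + 1 :=
  goodPartition_part_card_le_general n t ht K r P hP ℓ hℓ hℓr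
end
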